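/- arXiv:1607.02370 — 11 statements merged into one kernel-verified Lean document; each statement's English description precedes it below -/
import Mathlib

section
/- Let p be a prime number and let q be an integer with 1 < q < p. For every u ∈ ℤ_p, u is rational if and only if the sequence (g_{p,q}^n(u))_{n∈ℕ} is ultimately periodic. -/
open scoped Classical

/-- `ε₀(u)`: the unique integer in `{0, …, p−1}` congruent to `u` modulo `p`. -/
noncomputable def eps0 {p : ℕ} [Fact p.Prime] (u : ℤ_[p]) : ℕ := (PadicInt.toZMod u).val

/-!
Over a common denominator, one step of `g` multiplies the numerator by `1` or `q` and adds
less than `p` times the denominator before dividing by `p`. As `q < p`, the numerators of the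
orbit of `a / b` stay bounded, so the orbit is finite and hence ultimately periodic. Conversely
`p ^ n * g^[n] v = A * v + B` with natural numbers `0 < A ≤ q ^ n` and `B`; a period `k` gives
`(p ^ k - A) * v = B` with `p ^ k - A ≠ 0`, so `v` is rational, and then so is the starting point.
-/

open Function Set

section Dynamics

variable {α : Type*} {f : α → α} {x : α}

theorem Function.exists_iterate_mem_periodicPts_iff :
    (∃ n, f^[n] x ∈ periodicPts f) ↔
      ∃ n₀ : ℕ, ∃ k ≥ 1, ∀ n ≥ n₀, f^[n + k] x = f^[n] x := by
  constructor
  · rintro ⟨n₀, hper⟩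
    obtain ⟨k, hk, hper⟩ := mem_periodicPts.mp hper
    refine ⟨n₀, k, hk, fun n hn => ?_⟩
    obtain ⟨m, rfl⟩ := Nat.exists_eq_add_of_le hn
    have h := hper.apply_iterate m
    rw [← iterate_add_apply] at h
    rw [add_comm n₀, add_comm _ k, iterate_add_apply]
    exact h.eq
  · rintro ⟨n₀, k, hk, hper⟩
    refine ⟨n₀, mk_mem_periodicPts hk ?_⟩
    rw [IsPeriodicPt, IsFixedPt, ← iterate_add_apply, add_comm]
    exact hper n₀ le_rfl

theorem Set.MapsTo.exists_iterate_mem_periodicPts {s : Set α} (hf : MapsTo f s s)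
    (hs : s.Finite) (hx : x ∈ s) : ∃ n, f^[n] x ∈ periodicPts f := by
  obtain ⟨m, n, hmn, heq⟩ :=
    hs.exists_lt_map_eq_of_forall_mem (f := (f^[·] x)) fun n => hf.iterate n hx
  refine ⟨m, mk_mem_periodicPts (Nat.sub_pos_of_lt hmn) ?_⟩
  rw [IsPeriodicPt, IsFixedPt, ← iterate_add_apply, Nat.sub_add_cancel hmn.le]
  exact heq.symm

end Dynamics

theorem mem_range_ratCast_of_mul_eq {K : Type*} [Field K] [CharZero K] {x : K} {a b : ℚ}
    (ha : a ≠ 0) (h : (a : K) * x = b) : x ∈ range ((↑) : ℚ → K) :=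
  ⟨b / a, by rw [Rat.cast_div, ← h, mul_div_cancel_left₀ _ (Rat.cast_ne_zero.mpr ha)]⟩

section Collatz

variable {p q : ℕ} [Fact p.Prime]

/-- `g_{p,q}`, specified through `p * g u` since `ℤ_[p]` has no division. -/
def IsCollatzMap (p q : ℕ) [Fact p.Prime] (g : ℤ_[p] → ℤ_[p]) : Prop :=
  ∀ u : ℤ_[p], (p : ℤ_[p]) * g u =
    if (p : ℤ_[p]) ∣ u then u else (q : ℤ_[p]) * u + (eps0 (-((q : ℤ_[p]) * u)) : ℤ_[p])

variable {g : ℤ_[p] → ℤ_[p]}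

theorem eps0_lt (u : ℤ_[p]) : eps0 u < p := by
  have : NeZero p := ⟨(Fact.out : p.Prime).ne_zero⟩
  exact ZMod.val_lt _

theorem PadicInt.intCast_dvd_of_dvd_intCast {m : ℤ} (h : (p : ℤ_[p]) ∣ (m : ℤ_[p])) :
    (p : ℤ) ∣ m :=
  (PadicInt.norm_int_lt_one_iff_dvd m).mp ((PadicInt.norm_lt_one_iff_dvd _).mpr h)

theorem IsCollatzMap.exists_mul_apply_eq (hg : IsCollatzMap p q g) (v : ℤ_[p]) :
    ∃ A B : ℕ, (A = 1 ∨ A = q) ∧ B < p ∧ (p : ℤ_[p]) * g v = A * v + B := by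
  by_cases hv : (p : ℤ_[p]) ∣ v
  · exact ⟨1, 0, .inl rfl, (Fact.out : p.Prime).pos, by simp [hg v, hv]⟩
  · exact ⟨q, eps0 (-((q : ℤ_[p]) * v)), .inr rfl, eps0_lt _, by simp [hg v, hv]⟩

theorem IsCollatzMap.exists_pow_mul_iterate_eq (hg : IsCollatzMap p q g) (hq : 0 < q)
    (v : ℤ_[p]) (n : ℕ) :
    ∃ A B : ℕ, 0 < A ∧ A ≤ q ^ n ∧ (p : ℤ_[p]) ^ n * g^[n] v = A * v + B := by
  induction n with
  | zero => exact ⟨1, 0, one_pos, le_rfl, by simp⟩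
  | succ n ih =>
    obtain ⟨A, B, hA0, hAq, hA⟩ := ih
    obtain ⟨A₁, B₁, hA₁, -, hA₁v⟩ := hg.exists_mul_apply_eq (g^[n] v)
    have hA₁0 : 0 < A₁ := by rcases hA₁ with rfl | rfl <;> omega
    have hA₁q : A₁ ≤ q := by rcases hA₁ with rfl | rfl <;> omega
    refine ⟨A₁ * A, A₁ * B + p ^ n * B₁, Nat.mul_pos hA₁0 hA0, ?_, ?_⟩
    · rw [pow_succ']
      exact Nat.mul_le_mul hA₁q hAq
    · calc (p : ℤ_[p]) ^ (n + 1) * g^[n + 1] v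
          = p ^ n * (p * g (g^[n] v)) := by rw [iterate_succ_apply']; ring
        _ = A₁ * (p ^ n * g^[n] v) + p ^ n * B₁ := by rw [hA₁v]; ring
        _ = _ := by rw [hA]; push_cast; ring

def boundedFractions (p : ℕ) [Fact p.Prime] (b : ℕ) (M : ℤ) : Set ℤ_[p] :=
  {v | ∃ a : ℤ, |a| ≤ M ∧ (b : ℤ_[p]) * v = a}

theorem finite_boundedFractions {b : ℕ} (hb : b ≠ 0) (M : ℤ) :
    (boundedFractions p b M).Finite := by
  refine Finite.of_finite_image (f := ((b : ℤ_[p]) * ·)) ?_ ?_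
  · refine ((finite_Icc (-M) M).image ((↑) : ℤ → ℤ_[p])).subset ?_
    rintro _ ⟨v, ⟨a, ha, hv⟩, rfl⟩
    exact ⟨a, mem_Icc.mpr (abs_le.mp ha), hv.symm⟩
  · exact (mul_right_injective₀ (Nat.cast_ne_zero.mpr hb)).injOn

theorem ratCast_mem_boundedFractions {u : ℤ_[p]} {r : ℚ} (hr : (r : ℚ_[p]) = u) (M : ℤ)
    (hM : |r.num| ≤ M) : u ∈ boundedFractions p r.den M := by
  refine ⟨r.num, hM, Subtype.coe_injective ?_⟩
  push_cast
  rw [← hr, ← Rat.cast_natCast, ← Rat.cast_intCast, ← Rat.cast_mul, Rat.den_mul_eq_num]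

theorem IsCollatzMap.mapsTo_boundedFractions (hg : IsCollatzMap p q g) (hqp : q < p) {b : ℕ}
    {M : ℤ} (hM : ((p : ℤ) - 1) * b ≤ M) :
    MapsTo g (boundedFractions p b M) (boundedFractions p b M) := by
  rintro v ⟨a, haM, hav⟩
  obtain ⟨A, B, hA, hBp, hAv⟩ := hg.exists_mul_apply_eq v
  have hp : 1 < p := (Fact.out : p.Prime).one_lt
  have hApZ : (A : ℤ) + 1 ≤ p := by rcases hA with rfl | rfl <;> omega
  have hpv : (p : ℤ_[p]) * (b * g v) = ((A * a + B * b : ℤ) : ℤ_[p]) := by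
    rw [mul_left_comm, hAv, mul_add, mul_left_comm, hav]
    push_cast
    ring
  obtain ⟨a', ha'⟩ := PadicInt.intCast_dvd_of_dvd_intCast ⟨_, hpv.symm⟩
  refine ⟨a', ?_, ?_⟩
  · have hBpZ : (B : ℤ) ≤ p - 1 := by omega
    have hsum : |(A * a + B * b : ℤ)| ≤ p * M :=
      calc |(A * a + B * b : ℤ)| ≤ A * |a| + B * b := by
            refine (abs_add_le _ _).trans_eq ?_
            rw [abs_mul, abs_mul, Nat.abs_cast, Nat.abs_cast, Nat.abs_cast]
        _ ≤ A * M + (p - 1) * b := by gcongr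
        _ ≤ p * M := by nlinarith [abs_nonneg a]
    rw [ha', abs_mul, Nat.abs_cast] at hsum
    exact le_of_mul_le_mul_left hsum (by omega)
  · refine mul_left_cancel₀ (Nat.cast_ne_zero.mpr (Fact.out : p.Prime).ne_zero) ?_
    rw [hpv, ha']
    push_cast
    rfl

theorem IsCollatzMap.ratCast_mem_range_of_isPeriodicPt (hg : IsCollatzMap p q g) (hq : 0 < q)
    (hqp : q < p) {v : ℤ_[p]} {k : ℕ} (hk : 0 < k) (hv : IsPeriodicPt g k v) :
    (v : ℚ_[p]) ∈ range ((↑) : ℚ → ℚ_[p]) := by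
  obtain ⟨A, B, -, hAq, hA⟩ := hg.exists_pow_mul_iterate_eq hq v k
  rw [hv.eq] at hA
  have hAp : (A : ℚ) < (p : ℚ) ^ k := by
    exact_mod_cast hAq.trans_lt (Nat.pow_lt_pow_left hqp hk.ne')
  refine mem_range_ratCast_of_mul_eq (a := p ^ k - A) (b := B) (sub_ne_zero.mpr hAp.ne') ?_
  have := congrArg ((↑) : ℤ_[p] → ℚ_[p]) hA
  push_cast at this ⊢
  linear_combination this

theorem IsCollatzMap.ratCast_mem_range_of_iterate (hg : IsCollatzMap p q g) (hq : 0 < q)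
    {u : ℤ_[p]} {n : ℕ} (hu : (g^[n] u : ℚ_[p]) ∈ range ((↑) : ℚ → ℚ_[p])) :
    (u : ℚ_[p]) ∈ range ((↑) : ℚ → ℚ_[p]) := by
  obtain ⟨r, hr⟩ := hu
  obtain ⟨A, B, hA0, -, hA⟩ := hg.exists_pow_mul_iterate_eq hq u n
  refine mem_range_ratCast_of_mul_eq (a := A) (b := p ^ n * r - B) (by positivity) ?_
  have := congrArg ((↑) : ℤ_[p] → ℚ_[p]) hA
  push_cast at this ⊢
  rw [hr]
  linear_combination -this

end Collatz

/-- Let `p` be prime, `q` an integer with `1 < q < p`, and `g = g_{p,q}` (characterized by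
`p * g u = u` if `p ∣ u` and `p * g u = q * u + ε₀(-q*u)` otherwise). Then `u ∈ ℤ_p` is
rational iff the sequence of iterates `(g^n u)` is ultimately periodic. -/
theorem stmt0 (p q : ℕ) [Fact p.Prime] (hq1 : 1 < q) (hqp : q < p)
    (g : ℤ_[p] → ℤ_[p])
    (hg : ∀ u : ℤ_[p], (p : ℤ_[p]) * g u =
      if (p : ℤ_[p]) ∣ u then u
      else (q : ℤ_[p]) * u + (eps0 (-((q : ℤ_[p]) * u)) : ℤ_[p]))
    (u : ℤ_[p]) :
    ((u : ℚ_[p]) ∈ Set.range ((↑) : ℚ → ℚ_[p])) ↔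
      ∃ n₀ : ℕ, ∃ k ≥ 1, ∀ n ≥ n₀, g^[n + k] u = g^[n] u := by
  have hg : IsCollatzMap p q g := hg
  rw [← exists_iterate_mem_periodicPts_iff]
  constructor
  · rintro ⟨r, hr⟩
    exact (hg.mapsTo_boundedFractions hqp (le_max_right _ _)).exists_iterate_mem_periodicPts
      (finite_boundedFractions r.den_nz _) (ratCast_mem_boundedFractions hr _ (le_max_left _ _))
  · rintro ⟨n, hn⟩
    obtain ⟨k, hk, hper⟩ := mem_periodicPts.mp hn
    exact hg.ratCast_mem_range_of_iterate (by omega)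
      (hg.ratCast_mem_range_of_isPeriodicPt (by omega) hqp hk hper)
end

section
/- Let p be a prime number, q an integer with 1 < q < p, ψ : ℕ → ℕ a strictly increasing function, and (a_n)_{n∈ℕ} a sequence of integers with 1 ≤ a_n ≤ p−1 for all n. The formal power series G(T) = Σ_{n=0}^∞ a_n·p^{ψ(n)}·T^n ∈ ℚ[[T]] is rational (i.e. there exist polynomials P, Q ∈ ℚ[T] with Q ≠ 0 and Q·G = P) if and only if the p-adically convergent sum Σ_{n=0}^∞ a_n·p^{ψ(n)}·q^{−n} ∈ ℚ_p is rational. -/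
/-!
Write `x = q⁻¹`, a `p`-adic unit, and `G = Σ g_n T^n` with `g_n = a_n p^{ψ n}`, so that the
`p`-adic sum is `S = G(x)`.

If `Q G = P`, evaluating at `x` (the coefficients of `G` tend to `0` `p`-adically) gives
`Q(x) S = P(x)`; cancelling common factors `T - x` we may assume `Q(x) ≠ 0`, so `S = P(x) / Q(x)`.

Conversely, if `S` is rational, so is every normalised tail
`U_N = Σ_m a_{N+m} p^{ψ(N+m) - ψ N} x^m`, and `p^{ψ(N+1) - ψ N} U_{N+1} = q (U_N - a_N)`.
The `U_N` are `p`-adic integers whose denominators divide that of `U_0`, and since `q < p` this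
recursion keeps them bounded; hence `U_N = U_M` for some `N < M`. As every digit `a_n` is a
`p`-adic unit, the expansions of `U_N` and `U_M` agree digit by digit:
`a_{M+m} = a_{N+m}` and `ψ(M+m) - ψ M = ψ(N+m) - ψ N`. Thus `g_{M+m} = p^{ψ M - ψ N} g_{N+m}`,
and `(1 - p^{ψ M - ψ N} T^{M-N}) G` is a polynomial.
-/

section PolynomialMulPowerSeries

variable {R A : Type*} [Semiring R] [CommSemiring A] [TopologicalSpace A]
  [IsTopologicalSemiring A] (φ : R →+* A) (x : A)

theorem hasSum_coeff_coe_mul {f : PowerSeries R} {s : A}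
    (hf : HasSum (fun n => φ (PowerSeries.coeff n f) * x ^ n) s) (Q : Polynomial R) :
    HasSum (fun n => φ (PowerSeries.coeff n ((Q : PowerSeries R) * f)) * x ^ n)
      (Q.eval₂ φ x * s) := by
  induction Q using Polynomial.induction_on' with
  | add Q₁ Q₂ h₁ h₂ =>
    simpa only [Polynomial.coe_add, add_mul, map_add, Polynomial.eval₂_add] using h₁.add h₂
  | monomial k c =>
    have hcoeff : ∀ n, PowerSeries.coeff n (PowerSeries.monomial k c * f) =
        if k ≤ n then c * PowerSeries.coeff (n - k) f else 0 := by
      intro n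
      rw [PowerSeries.monomial_eq_C_mul_X_pow, mul_assoc,
        PowerSeries.coeff_C_mul, PowerSeries.coeff_X_pow_mul']
      split_ifs <;> simp
    rw [Polynomial.eval₂_monomial, Polynomial.coe_monomial, ← (add_left_injective k).hasSum_iff]
    · refine (hf.mul_left (φ c * x ^ k)).congr_fun fun n => ?_
      simp only [Function.comp_apply, hcoeff, le_add_iff_nonneg_left, zero_le, if_true,
        Nat.add_sub_cancel, map_mul, pow_add]
      ring
    · rintro n hn
      have hnk : ¬ k ≤ n := fun h => hn ⟨n - k, Nat.sub_add_cancel h⟩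
      simp [hcoeff, hnk]

theorem hasSum_coeff_coe (Q : Polynomial R) :
    HasSum (fun n => φ (PowerSeries.coeff n (Q : PowerSeries R)) * x ^ n) (Q.eval₂ φ x) := by
  have h1 : HasSum (fun n => φ (PowerSeries.coeff n (1 : PowerSeries R)) * x ^ n) 1 := by
    convert hasSum_ite_eq 0 (1 : A) using 2 with n
    split_ifs with h <;> simp [PowerSeries.coeff_one, h]
  simpa using hasSum_coeff_coe_mul φ x h1 Q

theorem eval₂_mul_eq_of_coe_mul_eq [T2Space A] {f : PowerSeries R} {s : A}
    (hf : HasSum (fun n => φ (PowerSeries.coeff n f) * x ^ n) s) {Q P : Polynomial R}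
    (h : (Q : PowerSeries R) * f = P) : Q.eval₂ φ x * s = P.eval₂ φ x :=
  (hasSum_coeff_coe_mul φ x hf Q).unique (h ▸ hasSum_coeff_coe φ x P)

end PolynomialMulPowerSeries

theorem exists_coe_mul_eq_coe_eval_ne_zero {K : Type*} [Field K] {G : PowerSeries K} {r : K}
    (hroot : ∀ Q P : Polynomial K, (Q : PowerSeries K) * G = P → Q.eval r = 0 → P.eval r = 0)
    {Q P : Polynomial K} (hQ : Q ≠ 0) (h : (Q : PowerSeries K) * G = P) :
    ∃ Q' P' : Polynomial K, (Q' : PowerSeries K) * G = P' ∧ Q'.eval r ≠ 0 := by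
  induction hd : Q.natDegree using Nat.strong_induction_on generalizing Q P with
  | _ d ih =>
  by_cases hQr : Q.eval r = 0
  · set L : Polynomial K := Polynomial.X - Polynomial.C r
    have hL : L ≠ 0 := Polynomial.X_sub_C_ne_zero r
    obtain ⟨Q₁, rfl⟩ : L ∣ Q := Polynomial.dvd_iff_isRoot.mpr hQr
    obtain ⟨P₁, rfl⟩ : L ∣ P := Polynomial.dvd_iff_isRoot.mpr (hroot _ _ h hQr)
    have hQ₁ : Q₁ ≠ 0 := right_ne_zero_of_mul hQ
    have h₁ : (Q₁ : PowerSeries K) * G = P₁ := by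
      refine mul_left_cancel₀ (Polynomial.coe_eq_zero_iff.not.mpr hL) ?_
      simpa only [Polynomial.coe_mul, mul_assoc] using h
    refine ih Q₁.natDegree ?_ hQ₁ h₁ rfl
    rw [← hd, Polynomial.natDegree_mul hL hQ₁, Polynomial.natDegree_X_sub_C]
    omega
  · exact ⟨Q, P, h, hQr⟩

theorem mem_range_of_hasSum_of_coe_mul_eq {K A : Type*} [Field K] [Field A]
    [TopologicalSpace A] [IsTopologicalRing A] [T2Space A] (φ : K →+* A) {G : PowerSeries K}
    {ξ : K} {S : A}
    (hS : HasSum (fun n => φ (PowerSeries.coeff n G) * φ ξ ^ n) S) {Q P : Polynomial K}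
    (hQ : Q ≠ 0) (h : (Q : PowerSeries K) * G = P) : S ∈ Set.range φ := by
  have heval : ∀ {Q P : Polynomial K}, (Q : PowerSeries K) * G = P →
      φ (Q.eval ξ) * S = φ (P.eval ξ) := fun h => by
    simpa only [Polynomial.eval₂_at_apply] using eval₂_mul_eq_of_coe_mul_eq φ (φ ξ) hS h
  have hroot : ∀ Q P : Polynomial K, (Q : PowerSeries K) * G = P → Q.eval ξ = 0 →
      P.eval ξ = 0 := fun Q P h hQ => by
    simpa [hQ] using (heval h).symm
  obtain ⟨Q', P', h', hQ'⟩ := exists_coe_mul_eq_coe_eval_ne_zero hroot hQ h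
  refine ⟨P'.eval ξ / Q'.eval ξ, ?_⟩
  rw [map_div₀, ← heval h', mul_div_cancel_left₀ _ ((map_ne_zero φ).mpr hQ')]

theorem exists_coe_mul_mk_eq_coe_of_shift {R : Type*} [CommRing R] [Nontrivial R]
    (b : ℕ → R) {N M : ℕ} (hNM : N < M) (c : R) (h : ∀ m, b (M + m) = c * b (N + m)) :
    ∃ P Q : Polynomial R, Q ≠ 0 ∧ (Q : PowerSeries R) * PowerSeries.mk b = P := by
  set Q : Polynomial R := 1 - Polynomial.C c * Polynomial.X ^ (M - N)
  have hQ : Q.coeff 0 = 1 := by simp [Q, Polynomial.coeff_X_pow, (Nat.sub_pos_of_lt hNM).ne]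
  have hcoeff : ∀ k, M ≤ k →
      PowerSeries.coeff k ((Q : PowerSeries R) * PowerSeries.mk b) = 0 := by
    intro k hk
    obtain ⟨m, rfl⟩ := Nat.exists_eq_add_of_le hk
    have hNm : M + m - (M - N) = N + m := by omega
    rw [Polynomial.coe_sub, Polynomial.coe_mul, Polynomial.coe_pow, Polynomial.coe_C,
      Polynomial.coe_X, Polynomial.coe_one, sub_mul, one_mul, mul_assoc, map_sub,
      PowerSeries.coeff_C_mul, PowerSeries.coeff_X_pow_mul', if_pos (by omega), hNm,
      PowerSeries.coeff_mk, PowerSeries.coeff_mk, h, sub_self]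
  refine ⟨PowerSeries.trunc M ((Q : PowerSeries R) * PowerSeries.mk b), Q,
    fun h0 => by simp [h0] at hQ, ?_⟩
  ext k
  rw [Polynomial.coeff_coe, PowerSeries.coeff_trunc]
  split_ifs with hk
  · rfl
  · exact hcoeff k (not_lt.mp hk)

theorem abs_le_of_recurrence {p q : ℕ} {a : ℕ → ℤ} {d : ℕ → ℕ} {u : ℕ → ℚ} (hqp : q < p)
    (ha : ∀ n, 1 ≤ a n ∧ a n ≤ (p : ℤ) - 1) (hd : ∀ n, 0 < d n)
    (hu : ∀ n, (p : ℚ) ^ d n * u (n + 1) = q * (u n - a n)) (n : ℕ) :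
    |u n| ≤ max |u 0| (q * p) := by
  induction n with
  | zero => exact le_max_left _ _
  | succ n ih =>
    set B := max |u 0| ((q : ℚ) * p)
    have hqp' : (q : ℚ) + 1 ≤ p := by exact_mod_cast hqp
    have hB : (q : ℚ) * p ≤ B := le_max_right _ _
    have hq₀ : (0 : ℚ) ≤ q := q.cast_nonneg
    have hp_le : (p : ℚ) ≤ (p : ℚ) ^ d n := le_self_pow₀ (by linarith) (hd n).ne'
    have ha_abs : |(a n : ℚ)| ≤ p := by
      have h₁ : (1 : ℚ) ≤ a n := by exact_mod_cast (ha n).1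
      have h₂ : (a n : ℚ) ≤ p - 1 := by exact_mod_cast (ha n).2
      rw [abs_le]
      constructor <;> linarith
    have hstep : (p : ℚ) * |u (n + 1)| ≤ q * (B + p) := calc
      (p : ℚ) * |u (n + 1)| ≤ (p : ℚ) ^ d n * |u (n + 1)| := by gcongr
      _ = q * |u n - a n| := by
        rw [← abs_of_nonneg (by positivity : (0 : ℚ) ≤ (p : ℚ) ^ d n), ← abs_mul, hu,
          abs_mul, abs_of_nonneg hq₀]
      _ ≤ q * (B + p) := by gcongr; exact (abs_sub _ _).trans (add_le_add ih ha_abs)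
    have hB₀ : 0 ≤ B := (abs_nonneg _).trans (le_max_left _ _)
    have hqB : (q : ℚ) * (B + p) ≤ p * B := by nlinarith
    exact le_of_mul_le_mul_left (hstep.trans hqB) (by linarith)

theorem exists_lt_eq_of_abs_le_of_den_mul_eq {u : ℕ → ℚ} {v : ℕ} (hv : 0 < v)
    (hint : ∀ n, ∃ z : ℤ, (v : ℚ) * u n = z) {B : ℚ} (hB : ∀ n, |u n| ≤ B) :
    ∃ N M, N < M ∧ u N = u M := by
  set K := ⌈(v : ℚ) * B⌉
  refine Set.Finite.exists_lt_map_eq_of_forall_mem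
    (t := (fun z : ℤ => (z : ℚ) / v) '' Set.Icc (-K) K) (fun n => ?_) ((Set.finite_Icc _ _).image _)
  obtain ⟨z, hz⟩ := hint n
  have hv' : (0 : ℚ) < v := by exact_mod_cast hv
  have hzK : |(z : ℚ)| ≤ K := by
    rw [← hz, abs_mul, abs_of_pos hv']
    exact (mul_le_mul_of_nonneg_left (hB n) hv'.le).trans (Int.le_ceil _)
  refine ⟨z, ?_, show (z : ℚ) / v = u n by rw [← hz]; field_simp⟩
  rw [abs_le] at hzK
  exact ⟨by exact_mod_cast hzK.1, by exact_mod_cast hzK.2⟩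

theorem add_eq_add_of_sub_succ_eq {ψ : ℕ → ℕ} (hψ : Monotone ψ) {N M : ℕ}
    (h : ∀ m, ψ (N + m + 1) - ψ (N + m) = ψ (M + m + 1) - ψ (M + m)) (m : ℕ) :
    ψ (M + m) + ψ N = ψ (N + m) + ψ M := by
  induction m with
  | zero => simp only [add_zero, add_comm]
  | succ m ih =>
    have := h m
    have := hψ (Nat.le_add_right (N + m) 1)
    have := hψ (Nat.le_add_right (M + m) 1)
    rw [← add_assoc, ← add_assoc]
    omega

namespace Padic

variable {p : ℕ} [Fact p.Prime]

theorem norm_intCast_mul_pow_mul_le (c : ℤ) (e : ℕ) {y : ℚ_[p]} (hy : ‖y‖ ≤ 1) :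
    ‖(c : ℚ_[p]) * (p : ℚ_[p]) ^ e * y‖ ≤ (p : ℝ)⁻¹ ^ e := by
  rw [norm_mul, norm_mul, norm_pow, norm_p]
  calc ‖(c : ℚ_[p])‖ * (p : ℝ)⁻¹ ^ e * ‖y‖ ≤ 1 * (p : ℝ)⁻¹ ^ e * 1 := by
        gcongr
        exact norm_int_le_one c
    _ = (p : ℝ)⁻¹ ^ e := by ring

theorem summable_intCast_mul_pow_mul_pow (c : ℕ → ℤ) {e : ℕ → ℕ} (he : ∀ n, n ≤ e n)
    {x : ℚ_[p]} (hx : ‖x‖ ≤ 1) :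
    Summable fun n => (c n : ℚ_[p]) * (p : ℚ_[p]) ^ e n * x ^ n := by
  have hp : (1 : ℝ) < p := by exact_mod_cast (Fact.out : p.Prime).one_lt
  have hp₀ : (0 : ℝ) ≤ (p : ℝ)⁻¹ := by positivity
  apply NonarchimedeanAddGroup.summable_of_tendsto_cofinite_zero
  rw [Nat.cofinite_eq_atTop, tendsto_zero_iff_norm_tendsto_zero]
  refine squeeze_zero (fun n => norm_nonneg _) (fun n => ?_)
    (tendsto_pow_atTop_nhds_zero_of_lt_one hp₀ (inv_lt_one_of_one_lt₀ hp))
  calc _ ≤ (p : ℝ)⁻¹ ^ e n :=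
        norm_intCast_mul_pow_mul_le _ _ (by rw [norm_pow]; exact pow_le_one₀ (norm_nonneg x) hx)
    _ ≤ (p : ℝ)⁻¹ ^ n := pow_le_pow_of_le_one hp₀ (inv_le_one_of_one_le₀ hp.le) (he n)

theorem norm_natCast_inv_eq_one {q : ℕ} (hq : 0 < q) (hqp : q < p) :
    ‖(q : ℚ_[p])⁻¹‖ = 1 := by
  rw [norm_inv, norm_natCast_eq_one_iff.mpr (Nat.coprime_of_lt_prime hq.ne' hqp Fact.out), inv_one]

theorem norm_intCast_eq_one_of_digit {z : ℤ} (hz : 1 ≤ z ∧ z ≤ (p : ℤ) - 1) :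
    ‖(z : ℚ_[p])‖ = 1 := by
  refine (norm_int_le_one z).antisymm (not_lt.mp fun h => ?_)
  have := Int.le_of_dvd (by omega) (norm_intCast_lt_one_iff.mp h)
  omega

theorem intCast_eq_of_digit_of_norm_sub_lt_one {α β : ℤ} (hα : 1 ≤ α ∧ α ≤ (p : ℤ) - 1)
    (hβ : 1 ≤ β ∧ β ≤ (p : ℤ) - 1) (h : ‖(α : ℚ_[p]) - β‖ < 1) : α = β := by
  rw [← Int.cast_sub, norm_intCast_lt_one_iff] at h
  have := Int.eq_zero_of_abs_lt_dvd h (abs_sub_lt_iff.mpr ⟨by omega, by omega⟩)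
  omega

theorem norm_mul_pow_mul_lt_one {x y : ℚ_[p]} (hx : ‖x‖ ≤ 1) (hy : ‖y‖ ≤ 1) {d : ℕ}
    (hd : 0 < d) : ‖x * (p : ℚ_[p]) ^ d * y‖ < 1 := by
  have hp : (1 : ℝ) < p := by exact_mod_cast (Fact.out : p.Prime).one_lt
  rw [norm_mul, norm_mul, norm_pow, norm_p]
  calc ‖x‖ * (p : ℝ)⁻¹ ^ d * ‖y‖ ≤ 1 * (p : ℝ)⁻¹ ^ d * 1 := by gcongr
    _ < 1 := by
      rw [one_mul, mul_one]
      exact pow_lt_one₀ (by positivity) (inv_lt_one_of_one_lt₀ hp) hd.ne'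

theorem digit_eq_and_eq_of_add_eq {x y₁ y₂ : ℚ_[p]} {α β : ℤ} {d₁ d₂ : ℕ} (hx : ‖x‖ = 1)
    (hα : 1 ≤ α ∧ α ≤ (p : ℤ) - 1) (hβ : 1 ≤ β ∧ β ≤ (p : ℤ) - 1) (hd₁ : 0 < d₁) (hd₂ : 0 < d₂)
    (hy₁ : ‖y₁‖ = 1) (hy₂ : ‖y₂‖ = 1)
    (h : α + x * (p : ℚ_[p]) ^ d₁ * y₁ = β + x * (p : ℚ_[p]) ^ d₂ * y₂) :
    α = β ∧ d₁ = d₂ ∧ y₁ = y₂ := by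
  have hp : (1 : ℝ) < p := by exact_mod_cast (Fact.out : p.Prime).one_lt
  have hαβ : α = β := by
    refine intCast_eq_of_digit_of_norm_sub_lt_one hα hβ ?_
    rw [show (α : ℚ_[p]) - β = x * p ^ d₂ * y₂ - x * p ^ d₁ * y₁ by linear_combination h,
      sub_eq_add_neg]
    refine (IsUltrametricDist.norm_add_le_max _ _).trans_lt (max_lt ?_ ?_)
    · exact norm_mul_pow_mul_lt_one hx.le hy₂.le hd₂
    · exact (norm_neg _).trans_lt (norm_mul_pow_mul_lt_one hx.le hy₁.le hd₁)
  subst hαβ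
  have hx₀ : x ≠ 0 := norm_ne_zero_iff.mp (by simp [hx])
  have hpy : (p : ℚ_[p]) ^ d₁ * y₁ = p ^ d₂ * y₂ := by
    rw [add_right_inj, mul_assoc, mul_assoc] at h
    exact mul_left_cancel₀ hx₀ h
  have hd : d₁ = d₂ := by
    have := congrArg norm hpy
    rw [norm_mul, norm_mul, hy₁, hy₂, norm_pow, norm_pow, norm_p, mul_one, mul_one] at this
    exact pow_right_injective₀ (by positivity) (inv_lt_one_of_one_lt₀ hp).ne this
  subst hd
  have hp₀ : (p : ℚ_[p]) ≠ 0 := Nat.cast_ne_zero.mpr (Fact.out : p.Prime).ne_zero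
  exact ⟨rfl, rfl, mul_left_cancel₀ (pow_ne_zero _ hp₀) hpy⟩

theorem digits_eq_of_eq {x : ℚ_[p]} {a : ℕ → ℤ} {d : ℕ → ℕ} {U : ℕ → ℚ_[p]} (hx : ‖x‖ = 1)
    (ha : ∀ n, 1 ≤ a n ∧ a n ≤ (p : ℤ) - 1) (hd : ∀ n, 0 < d n) (hU₁ : ∀ n, ‖U n‖ ≤ 1)
    (hU : ∀ n, U n = a n + x * (p : ℚ_[p]) ^ d n * U (n + 1)) {N M : ℕ} (h : U N = U M)
    (m : ℕ) : a (N + m) = a (M + m) ∧ d (N + m) = d (M + m) := by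
  -- each `U n` is a unit: its leading digit `a n` is, and the rest lies in `p ℤ_p`
  have hU_norm : ∀ n, ‖U n‖ = 1 := by
    intro n
    have hrest := norm_mul_pow_mul_lt_one hx.le (hU₁ (n + 1)) (hd n)
    rw [hU n, IsUltrametricDist.norm_add_eq_max_of_norm_ne_norm,
      norm_intCast_eq_one_of_digit (ha n)]
    · exact max_eq_left hrest.le
    · rw [norm_intCast_eq_one_of_digit (ha n)]
      exact hrest.ne'
  have hstep : ∀ n n', U n = U n' → a n = a n' ∧ d n = d n' ∧ U (n + 1) = U (n' + 1) := by
    intro n n' hn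
    rw [hU n, hU n'] at hn
    exact digit_eq_and_eq_of_add_eq hx (ha n) (ha n') (hd n) (hd n') (hU_norm _) (hU_norm _) hn
  have hshift : ∀ m, U (N + m) = U (M + m) := by
    intro m
    induction m with
    | zero => exact h
    | succ m ih => exact (hstep _ _ ih).2.2
  exact ⟨(hstep _ _ (hshift m)).1, (hstep _ _ (hshift m)).2.1⟩

theorem exists_intCast_eq_of_pow_mul_eq {y : ℚ} {k : ℕ} {z : ℤ} (h : (p : ℚ) ^ k * y = z)
    (hy : ‖(y : ℚ_[p])‖ ≤ 1) : ∃ w : ℤ, y = w := by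
  have hz : ‖(z : ℚ_[p])‖ ≤ (p : ℝ) ^ (-(k : ℤ)) := by
    have : (z : ℚ_[p]) = (p : ℚ_[p]) ^ k * y := by exact_mod_cast h.symm
    rw [this, norm_mul, norm_p_pow]
    exact mul_le_of_le_one_right (by positivity) hy
  obtain ⟨w, rfl⟩ := (norm_int_le_pow_iff_dvd z k).mp hz
  have hp₀ : (p : ℚ) ≠ 0 := Nat.cast_ne_zero.mpr (Fact.out : p.Prime).ne_zero
  refine ⟨w, mul_left_cancel₀ (pow_ne_zero k hp₀) ?_⟩
  rw [h]
  push_cast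
  ring

theorem exists_intCast_eq_den_mul_of_recurrence {q : ℕ} {a : ℕ → ℤ} {d : ℕ → ℕ} {u : ℕ → ℚ}
    (hu : ∀ n, (p : ℚ) ^ d n * u (n + 1) = q * (u n - a n)) (hu₁ : ∀ n, ‖(u n : ℚ_[p])‖ ≤ 1)
    (n : ℕ) : ∃ z : ℤ, ((u 0).den : ℚ) * u n = z := by
  induction n with
  | zero => exact ⟨(u 0).num, Rat.den_mul_eq_num _⟩
  | succ n ih =>
    obtain ⟨z, hz⟩ := ih
    refine exists_intCast_eq_of_pow_mul_eq (p := p) (k := d n)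
      (z := q * (z - (u 0).den * a n)) ?_ ?_
    · rw [mul_left_comm, hu]
      push_cast
      rw [← hz]
      ring
    · rw [Rat.cast_mul, norm_mul]
      exact mul_le_one₀ (by exact_mod_cast norm_int_le_one ((u 0).den : ℤ)) (norm_nonneg _)
        (hu₁ (n + 1))

variable (a : ℕ → ℤ) (ψ : ℕ → ℕ) (x : ℚ_[p])

-- The subtraction in the exponent is exact when `ψ` is monotone.
noncomputable def tailSum (N : ℕ) : ℚ_[p] :=
  ∑' m, (a (N + m) : ℚ_[p]) * (p : ℚ_[p]) ^ (ψ (N + m) - ψ N) * x ^ m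

variable {a ψ x}

theorem summable_tailSum (hψ : StrictMono ψ) (hx : ‖x‖ ≤ 1) (N : ℕ) :
    Summable fun m => (a (N + m) : ℚ_[p]) * (p : ℚ_[p]) ^ (ψ (N + m) - ψ N) * x ^ m :=
  summable_intCast_mul_pow_mul_pow _
    (fun m => by have := hψ.add_le_nat m N; rw [add_comm N]; omega) hx

theorem norm_tailSum_le_one (hx : ‖x‖ ≤ 1) (N : ℕ) : ‖tailSum a ψ x N‖ ≤ 1 := by
  refine IsUltrametricDist.norm_tsum_le_of_forall_le_of_nonneg zero_le_one fun m => ?_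
  have hp : (1 : ℝ) ≤ p := by exact_mod_cast (Fact.out : p.Prime).one_lt.le
  refine (norm_intCast_mul_pow_mul_le _ _ ?_).trans
    (pow_le_one₀ (by positivity) (inv_le_one_of_one_le₀ hp))
  rw [norm_pow]
  exact pow_le_one₀ (norm_nonneg x) hx

theorem tailSum_eq_add (hψ : StrictMono ψ) (hx : ‖x‖ ≤ 1) (N : ℕ) :
    tailSum a ψ x N = a N + x * (p : ℚ_[p]) ^ (ψ (N + 1) - ψ N) * tailSum a ψ x (N + 1) := by
  rw [tailSum, (summable_tailSum hψ hx N).tsum_eq_zero_add, tailSum, ← tsum_mul_left]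
  congr 1
  · simp
  · refine tsum_congr fun m => ?_
    have h₁ := hψ.monotone (Nat.le_add_right N 1)
    have h₂ := hψ.monotone (show N + 1 ≤ N + 1 + m by omega)
    rw [show N + (m + 1) = N + 1 + m by omega, show ψ (N + 1 + m) - ψ N =
      (ψ (N + 1) - ψ N) + (ψ (N + 1 + m) - ψ (N + 1)) by omega, pow_add, pow_succ]
    ring

theorem tsum_eq_pow_mul_tailSum_zero (hψ : Monotone ψ) :
    ∑' n, (a n : ℚ_[p]) * (p : ℚ_[p]) ^ ψ n * x ^ n = (p : ℚ_[p]) ^ ψ 0 * tailSum a ψ x 0 := by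
  rw [tailSum, ← tsum_mul_left]
  refine tsum_congr fun n => ?_
  rw [zero_add, ← mul_assoc, mul_left_comm _ (a n : ℚ_[p]), ← pow_add,
    Nat.add_sub_cancel' (hψ (Nat.zero_le n))]

theorem pow_mul_tailSum_succ {q : ℕ} (hq : (q : ℚ_[p]) * x = 1) (hψ : StrictMono ψ)
    (hx : ‖x‖ ≤ 1) (N : ℕ) :
    (p : ℚ_[p]) ^ (ψ (N + 1) - ψ N) * tailSum a ψ x (N + 1) = q * (tailSum a ψ x N - a N) := by
  rw [tailSum_eq_add hψ hx N, add_sub_cancel_left, ← mul_assoc, ← mul_assoc, hq, one_mul]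

theorem tailSum_mem_range {q : ℕ} (hq : (q : ℚ_[p]) * x = 1) (hψ : StrictMono ψ)
    (hx : ‖x‖ ≤ 1)
    (hS : ∑' n, (a n : ℚ_[p]) * (p : ℚ_[p]) ^ ψ n * x ^ n ∈ Set.range ((↑) : ℚ → ℚ_[p]))
    (N : ℕ) : tailSum a ψ x N ∈ Set.range ((↑) : ℚ → ℚ_[p]) := by
  have hp : (p : ℚ_[p]) ≠ 0 := Nat.cast_ne_zero.mpr (Fact.out : p.Prime).ne_zero
  induction N with
  | zero =>
    obtain ⟨r, hr⟩ := hS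
    refine ⟨r / p ^ ψ 0, ?_⟩
    rw [tsum_eq_pow_mul_tailSum_zero hψ.monotone] at hr
    push_cast
    rw [hr, mul_div_cancel_left₀ _ (pow_ne_zero _ hp)]
  | succ N ih =>
    obtain ⟨r, hr⟩ := ih
    refine ⟨q * (r - a N) / p ^ (ψ (N + 1) - ψ N), ?_⟩
    push_cast
    rw [hr, ← pow_mul_tailSum_succ hq hψ hx, mul_div_cancel_left₀ _ (pow_ne_zero _ hp)]

theorem exists_lt_shift_eq_of_tsum_mem_range {q : ℕ} (hq : 0 < q) (hqp : q < p)
    {ψ : ℕ → ℕ} (hψ : StrictMono ψ) {a : ℕ → ℤ} (ha : ∀ n, 1 ≤ a n ∧ a n ≤ (p : ℤ) - 1)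
    (hS : ∑' n, (a n : ℚ_[p]) * (p : ℚ_[p]) ^ ψ n * ((q : ℚ_[p])⁻¹) ^ n ∈
      Set.range ((↑) : ℚ → ℚ_[p])) :
    ∃ N M, N < M ∧ ∀ m, a (M + m) = a (N + m) ∧ ψ (M + m) + ψ N = ψ (N + m) + ψ M := by
  set x : ℚ_[p] := (q : ℚ_[p])⁻¹
  have hx : ‖x‖ = 1 := norm_natCast_inv_eq_one hq hqp
  have hqx : (q : ℚ_[p]) * x = 1 := mul_inv_cancel₀ (Nat.cast_ne_zero.mpr hq.ne')
  have hd : ∀ n, 0 < ψ (n + 1) - ψ n := fun n => Nat.sub_pos_of_lt (hψ n.lt_succ_self)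
  choose u hu using tailSum_mem_range hqx hψ hx.le hS
  have hrec : ∀ n, (p : ℚ) ^ (ψ (n + 1) - ψ n) * u (n + 1) = q * (u n - a n) := fun n =>
    Rat.cast_injective (α := ℚ_[p]) <| by
      push_cast
      rw [hu, hu]
      exact pow_mul_tailSum_succ hqx hψ hx.le n
  have hu₁ : ∀ n, ‖(u n : ℚ_[p])‖ ≤ 1 := fun n => (hu n).symm ▸ norm_tailSum_le_one hx.le n
  obtain ⟨N, M, hNM, huNM⟩ := exists_lt_eq_of_abs_le_of_den_mul_eq (u 0).den_pos
    (exists_intCast_eq_den_mul_of_recurrence hrec hu₁) (abs_le_of_recurrence hqp ha hd hrec)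
  have hdigits := digits_eq_of_eq hx ha hd (norm_tailSum_le_one hx.le)
    (tailSum_eq_add hψ hx.le) (by rw [← hu, ← hu, huNM] : tailSum a ψ x N = tailSum a ψ x M)
  exact ⟨N, M, hNM, fun m => ⟨(hdigits m).1.symm,
    add_eq_add_of_sub_succ_eq hψ.monotone (fun m => (hdigits m).2) m⟩⟩

end Padic

/-- Let `p` be prime, `q` an integer with `1 < q < p`, `ψ : ℕ → ℕ` strictly increasing and
`(a n)` integers with `1 ≤ a n ≤ p - 1`. The formal power series
`G(T) = Σ a_n p^{ψ(n)} T^n ∈ ℚ[[T]]` is rational iff the p-adic sum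
`Σ a_n p^{ψ(n)} q^{-n} ∈ ℚ_p` is a rational number. -/
theorem stmt1 (p q : ℕ) [Fact p.Prime] (hq1 : 1 < q) (hqp : q < p)
    (ψ : ℕ → ℕ) (hψ : StrictMono ψ) (a : ℕ → ℤ)
    (ha : ∀ n, 1 ≤ a n ∧ a n ≤ (p : ℤ) - 1) :
    (∃ P Q : Polynomial ℚ, Q ≠ 0 ∧
        (Q : PowerSeries ℚ) * (PowerSeries.mk fun n => ((a n : ℚ) * (p : ℚ) ^ ψ n)) =
          (P : PowerSeries ℚ)) ↔
      (∑' n : ℕ, ((a n : ℚ_[p]) * (p : ℚ_[p]) ^ ψ n * ((q : ℚ_[p])⁻¹) ^ n)) ∈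
        Set.range ((↑) : ℚ → ℚ_[p]) := by
  constructor
  · rintro ⟨P, Q, hQ, h⟩
    have hx : ‖(q : ℚ_[p])⁻¹‖ ≤ 1 := (Padic.norm_natCast_inv_eq_one (by omega) hqp).le
    refine mem_range_of_hasSum_of_coe_mul_eq (Rat.castHom ℚ_[p]) (ξ := (q : ℚ)⁻¹) ?_ hQ h
    simpa using (Padic.summable_intCast_mul_pow_mul_pow a (fun n => hψ.id_le n) hx).hasSum
  · intro hS
    obtain ⟨N, M, hNM, h⟩ := Padic.exists_lt_shift_eq_of_tsum_mem_range (by omega) hqp hψ ha hS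
    refine exists_coe_mul_mk_eq_coe_of_shift _ hNM ((p : ℚ) ^ (ψ M - ψ N)) fun m => ?_
    rw [(h m).1, show ψ (M + m) = ψ (N + m) + (ψ M - ψ N) by
      have := (h m).2
      have := hψ.monotone hNM.le
      omega, pow_add]
    ring
end

section
/- For every u ∈ ℤ_p, if φ_{p,q}(u) is rational then u is rational; that is, φ_{p,q}^{−1}(ℚ ∩ ℤ_p) ⊆ ℚ ∩ ℤ_p. -/
open scoped Classical

/-- `φ_{p,q}(u) = Σ ε₀(-q·g^n(u)) p^n`, for a given iteration map `g`. -/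
noncomputable def phi (p q : ℕ) [Fact p.Prime] (g : ℤ_[p] → ℤ_[p]) (u : ℤ_[p]) : ℤ_[p] :=
  ∑' n : ℕ, (eps0 (-((q : ℤ_[p]) * g^[n] u)) : ℤ_[p]) * (p : ℤ_[p]) ^ n

/-!
Write `u_n = g^[n] u` and `a_n = ε₀(-q u_n)` for the digits of `φ(u)`. The defining relation of
`g` reads `u_{n+1} = α(a_n) u_n + a_n / p`, where `α(a) = 1/p` if `a = 0` and `q/p` otherwise, so
`|α(a_n)|_p = p`. If `φ(u)` is rational, its tails `Σ_k a_{n+k} p^k` have bounded numerators over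
a fixed denominator, so two tails coincide and the digits are eventually periodic. Over one period
the orbit then follows a fixed expanding affine map with rational coefficients; an orbit that stays
in `ℤ_p` must sit at the rational fixed point of that map, and running the recurrence backwards
carries rationality down to `u`.
-/

open Finset Function

section AffineRecurrence

variable {K : Type*} [NormedField K]

theorem eq_div_of_affine_orbit_bounded {A B : K} (hA : 1 < ‖A‖) {w : ℕ → K}
    (hw : ∀ k, w (k + 1) = A * w k + B) {C : ℝ} (hC : ∀ k, ‖w k‖ ≤ C) :
    w 0 = B / (1 - A) := by
  have h1A : 1 - A ≠ 0 := fun h => by simp [← sub_eq_zero.mp h] at hA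
  have hz : A * (B / (1 - A)) + B = B / (1 - A) := by field_simp; ring
  set z := B / (1 - A)
  have hpow : ∀ k, w k - z = A ^ k * (w 0 - z) := by
    intro k
    induction k with
    | zero => simp
    | succ k ih => rw [hw, pow_succ', mul_assoc, ← ih]; linear_combination hz
  by_contra hne
  have hpos : 0 < ‖w 0 - z‖ := norm_pos_iff.mpr (sub_ne_zero.mpr hne)
  obtain ⟨k, hk⟩ := pow_unbounded_of_one_lt ((C + ‖z‖) / ‖w 0 - z‖) hA
  rw [div_lt_iff₀ hpos] at hk
  have : ‖A‖ ^ k * ‖w 0 - z‖ ≤ C + ‖z‖ :=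
    calc ‖A‖ ^ k * ‖w 0 - z‖ = ‖w k - z‖ := by rw [hpow k, norm_mul, norm_pow]
      _ ≤ ‖w k‖ + ‖z‖ := norm_sub_le _ _
      _ ≤ C + ‖z‖ := by linarith [hC k]
  linarith

theorem one_lt_norm_prod_range {α : ℕ → K} (hα : ∀ n, 1 < ‖α n‖) {T : ℕ} (hT : 0 < T) :
    1 < ‖∏ i ∈ range T, α i‖ := by
  induction T with
  | zero => exact absurd hT (lt_irrefl 0)
  | succ T ih =>
    rw [prod_range_succ, norm_mul]
    rcases T.eq_zero_or_pos with rfl | hT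
    · simpa using hα 0
    · nlinarith [ih hT, hα T]

variable (S : Subfield K) {α β : ℕ → K} (hα : ∀ n, α n ∈ S) (hβ : ∀ n, β n ∈ S)
include hα hβ

theorem exists_mem_affine_iterate (t : ℕ) :
    ∃ B ∈ S, ∀ v : ℕ → K, (∀ n, v (n + 1) = α n * v n + β n) →
      v t = (∏ i ∈ range t, α i) * v 0 + B := by
  induction t with
  | zero => exact ⟨0, S.zero_mem, fun v _ => by simp⟩
  | succ t ih =>
    obtain ⟨B, hB, hvB⟩ := ih
    refine ⟨α t * B + β t, S.add_mem (S.mul_mem (hα t) hB) (hβ t), fun v hv => ?_⟩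
    rw [hv, hvB v hv, prod_range_succ]
    ring

theorem mem_of_affine_recurrence_of_mem (hα0 : ∀ n, α n ≠ 0) {v : ℕ → K}
    (hv : ∀ n, v (n + 1) = α n * v n + β n) {m : ℕ} (hm : v m ∈ S) : v 0 ∈ S := by
  induction m with
  | zero => exact hm
  | succ m ih =>
    apply ih
    rw [show v m = (v (m + 1) - β m) / α m by field_simp [hα0 m]; rw [hv]; ring]
    exact S.div_mem (S.sub_mem hm (hβ m)) (hα m)

theorem mem_of_periodic_affine_recurrence (hα1 : ∀ n, 1 < ‖α n‖) {T : ℕ} (hT : 0 < T)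
    (hαT : Periodic α T) (hβT : Periodic β T) {v : ℕ → K}
    (hv : ∀ n, v (n + 1) = α n * v n + β n) {C : ℝ} (hC : ∀ n, ‖v n‖ ≤ C) : v 0 ∈ S := by
  obtain ⟨B, hB, hvB⟩ := exists_mem_affine_iterate S hα hβ T
  have hw : ∀ k, v ((k + 1) * T) = (∏ i ∈ range T, α i) * v (k * T) + B := by
    intro k
    have hαk : Periodic α (k * T) := by simpa using hαT.nat_mul k
    have hβk : Periodic β (k * T) := by simpa using hβT.nat_mul k
    have := hvB (fun n => v (n + k * T)) fun n => by
      simp only [add_right_comm n 1, hv, hαk n, hβk n]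
    simpa [add_mul, add_comm] using this
  have h0 := eq_div_of_affine_orbit_bounded (w := fun k => v (k * T))
    (one_lt_norm_prod_range hα1 hT) hw fun k => hC _
  rw [zero_mul] at h0
  rw [h0]
  exact S.div_mem hB (S.sub_mem S.one_mem (prod_mem fun i _ => hα i))

theorem mem_of_eventually_periodic_affine_recurrence (hα1 : ∀ n, 1 < ‖α n‖) {m T : ℕ}
    (hT : 0 < T) (hαT : Periodic (fun n => α (m + n)) T) (hβT : Periodic (fun n => β (m + n)) T)
    {v : ℕ → K} (hv : ∀ n, v (n + 1) = α n * v n + β n) {C : ℝ} (hC : ∀ n, ‖v n‖ ≤ C) :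
    v 0 ∈ S := by
  refine mem_of_affine_recurrence_of_mem S hα hβ
    (fun n => norm_pos_iff.mp (one_pos.trans (hα1 n))) hv (m := m) ?_
  simpa using mem_of_periodic_affine_recurrence S (fun n => hα (m + n)) (fun n => hβ (m + n))
    (fun n => hα1 (m + n)) hT hαT hβT (v := fun n => v (m + n)) (fun n => hv (m + n))
    fun n => hC (m + n)

end AffineRecurrence

namespace PadicInt

variable {p : ℕ} [Fact p.Prime]

theorem summable_mul_p_pow (b : ℕ → ℤ_[p]) : Summable fun k => b k * (p : ℤ_[p]) ^ k := by
  refine Summable.of_norm_bounded (g := fun k => ((p : ℝ)⁻¹) ^ k)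
    (summable_geometric_of_lt_one (by positivity) ?_) fun k => ?_
  · exact inv_lt_one_of_one_lt₀ (by exact_mod_cast (Fact.out : p.Prime).one_lt)
  · rw [norm_mul, norm_pow, norm_p]
    exact mul_le_of_le_one_left (by positivity) (norm_le_one _)

theorem tsum_mul_p_pow_eq (b : ℕ → ℤ_[p]) :
    ∑' k, b k * (p : ℤ_[p]) ^ k = b 0 + p * ∑' k, b (k + 1) * (p : ℤ_[p]) ^ k := by
  rw [(summable_mul_p_pow b).tsum_eq_zero_add, pow_zero, mul_one,
    ← (summable_mul_p_pow _).tsum_mul_left]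
  congr 1
  exact tsum_congr fun k => by ring

theorem eps0_natCast_add_p_mul {a : ℕ} (ha : a < p) (y : ℤ_[p]) :
    eps0 ((a : ℤ_[p]) + (p : ℤ_[p]) * y) = a := by
  simp [eps0, ZMod.val_cast_of_lt ha]

theorem eps0_eq_zero_iff (x : ℤ_[p]) : eps0 x = 0 ↔ (p : ℤ_[p]) ∣ x := by
  rw [eps0, ZMod.val_eq_zero, ← RingHom.mem_ker, ker_toZMod, maximalIdeal_eq_span_p,
    Ideal.mem_span_singleton]

section DigitRecurrence

variable {a : ℕ → ℕ} (ha : ∀ n, a n < p) {x : ℕ → ℤ_[p]} (hx : ∀ n, x n = a n + p * x (n + 1))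
include ha hx

theorem eq_eps0_of_digit_recurrence (n : ℕ) : a n = eps0 (x n) := by
  rw [hx, eps0_natCast_add_p_mul (ha n)]

theorem eq_add_of_digit_recurrence {m n : ℕ} (hmn : x m = x n) (j : ℕ) :
    x (m + j) = x (n + j) := by
  induction j with
  | zero => exact hmn
  | succ j ih =>
    have hdigit : a (m + j) = a (n + j) := by
      rw [eq_eps0_of_digit_recurrence ha hx, eq_eps0_of_digit_recurrence ha hx, ih]
    have h : (a (m + j) : ℤ_[p]) + p * x (m + j + 1) = a (n + j) + p * x (n + j + 1) := by
      rw [← hx, ← hx, ih]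
    rw [hdigit] at h
    exact mul_left_cancel₀ (NeZero.ne (p : ℤ_[p])) (add_left_cancel h)

/-- A denominator `d` of `x 0` stays a denominator of every `x n`, and the numerators stay
bounded because `x (n + 1) = (x n - a n) / p` shrinks large numerators by a factor `p`. -/
theorem exists_bounded_numerator_of_digit_recurrence {d : ℕ} {k₀ : ℤ}
    (h₀ : (d : ℤ_[p]) * x 0 = k₀) (n : ℕ) :
    ∃ k : ℤ, k ∈ Set.Icc (-max |k₀| (d * p)) (max |k₀| (d * p)) ∧ (d : ℤ_[p]) * x n = k := by
  set K := max |k₀| (d * p)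
  induction n with
  | zero => exact ⟨k₀, abs_le.mp (le_max_left _ _), h₀⟩
  | succ n ih =>
    obtain ⟨k, hkK, hk⟩ := ih
    have hsub : ((k - d * a n : ℤ) : ℤ_[p]) = p * (d * x (n + 1)) := by
      push_cast
      rw [← hk, hx n]
      ring
    obtain ⟨k', hk'⟩ : (p : ℤ) ∣ k - d * a n := by
      rw [← norm_int_lt_one_iff_dvd, hsub, norm_lt_one_iff_dvd]
      exact dvd_mul_right _ _
    refine ⟨k', ?_, ?_⟩
    · have hp : (1 : ℤ) < p := by exact_mod_cast (Fact.out : p.Prime).one_lt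
      have hdK : (d : ℤ) * p ≤ K := le_max_right _ _
      have han : (a n : ℤ) ≤ p - 1 := by have := ha n; omega
      rw [Set.mem_Icc] at hkK ⊢
      constructor <;> nlinarith [Int.natCast_nonneg (a n)]
    · apply mul_left_cancel₀ (NeZero.ne (p : ℤ_[p]))
      rw [← hsub, hk']
      push_cast
      rfl

theorem exists_periodic_of_digit_recurrence
    (hrat : (x 0 : ℚ_[p]) ∈ Set.range ((↑) : ℚ → ℚ_[p])) :
    ∃ m T, 0 < T ∧ Periodic (fun j => a (m + j)) T := by
  obtain ⟨r, hr⟩ := hrat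
  have h₀ : (r.den : ℤ_[p]) * x 0 = r.num := by
    apply PadicInt.ext
    push_cast
    rw [← hr]
    exact_mod_cast r.den_mul_eq_num
  set K := max |r.num| (r.den * p)
  have hfin : {y : ℤ_[p] | ∃ k ∈ Set.Icc (-K) K, (r.den : ℤ_[p]) * y = k}.Finite := by
    refine (((Set.finite_Icc (-K) K).image ((↑) : ℤ → ℤ_[p])).preimage
      (f := fun y => (r.den : ℤ_[p]) * y) ?_).subset ?_
    · exact (mul_right_injective₀ (Nat.cast_ne_zero.mpr r.den_pos.ne')).injOn
    · rintro y ⟨k, hk, hy⟩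
      exact ⟨k, hk, hy.symm⟩
  obtain ⟨m, n, hmn, hxmn⟩ := hfin.exists_lt_map_eq_of_forall_mem (f := x)
    (exists_bounded_numerator_of_digit_recurrence ha hx h₀)
  refine ⟨m, n - m, Nat.sub_pos_of_lt hmn, fun j => ?_⟩
  simp only [eq_eps0_of_digit_recurrence ha hx]
  rw [show m + (j + (n - m)) = n + j by omega, eq_add_of_digit_recurrence ha hx hxmn]

end DigitRecurrence

end PadicInt

theorem coe_apply_eq_affine_in_digit {p q : ℕ} [Fact p.Prime] (hpq : p.Coprime q)
    {g : ℤ_[p] → ℤ_[p]}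
    (hg : ∀ u : ℤ_[p], (p : ℤ_[p]) * g u =
      if (p : ℤ_[p]) ∣ u then u
      else (q : ℤ_[p]) * u + (eps0 (-((q : ℤ_[p]) * u)) : ℤ_[p]))
    (w : ℤ_[p]) :
    ((g w : ℤ_[p]) : ℚ_[p]) =
      (if eps0 (-((q : ℤ_[p]) * w)) = 0 then 1 else (q : ℚ_[p])) / p * w +
        (eps0 (-((q : ℤ_[p]) * w)) : ℚ_[p]) / p := by
  have hq : IsUnit (q : ℤ_[p]) :=
    PadicInt.isUnit_iff.mpr (PadicInt.norm_natCast_eq_one_iff.mpr hpq)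
  have hdigit : eps0 (-((q : ℤ_[p]) * w)) = 0 ↔ (p : ℤ_[p]) ∣ w := by
    rw [PadicInt.eps0_eq_zero_iff, dvd_neg, hq.dvd_mul_left]
  have h := congrArg ((↑) : ℤ_[p] → ℚ_[p]) (hg w)
  have hp : (p : ℚ_[p]) ≠ 0 := NeZero.ne _
  by_cases hw : (p : ℤ_[p]) ∣ w
  · rw [if_pos hw] at h
    rw [if_pos (hdigit.mpr hw), hdigit.mpr hw]
    push_cast at h ⊢
    field_simp
    linear_combination h
  · rw [if_neg hw] at h
    rw [if_neg (mt hdigit.mp hw)]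
    push_cast at h ⊢
    field_simp
    linear_combination h

theorem stmt2_general (p q : ℕ) [Fact p.Prime] (hpq : Nat.Coprime p q)
    (g : ℤ_[p] → ℤ_[p])
    (hg : ∀ u : ℤ_[p], (p : ℤ_[p]) * g u =
      if (p : ℤ_[p]) ∣ u then u
      else (q : ℤ_[p]) * u + (eps0 (-((q : ℤ_[p]) * u)) : ℤ_[p]))
    (u : ℤ_[p])
    (h : ((phi p q g u : ℤ_[p]) : ℚ_[p]) ∈ Set.range ((↑) : ℚ → ℚ_[p])) :
    (u : ℚ_[p]) ∈ Set.range ((↑) : ℚ → ℚ_[p]) := by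
  set a : ℕ → ℕ := fun n => eps0 (-((q : ℤ_[p]) * g^[n] u))
  have ha : ∀ n, a n < p := fun n => ZMod.val_lt _
  obtain ⟨m, T, hT, hper⟩ := PadicInt.exists_periodic_of_digit_recurrence ha
    (x := fun n => ∑' k, (a (n + k) : ℤ_[p]) * (p : ℤ_[p]) ^ k)
    (fun n => by simpa [add_assoc, add_comm 1] using
      PadicInt.tsum_mul_p_pow_eq fun k => (a (n + k) : ℤ_[p]))
    (by simpa [phi] using h)
  set α : ℕ → ℚ_[p] := fun n => (if a n = 0 then 1 else (q : ℚ_[p])) / p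
  set β : ℕ → ℚ_[p] := fun n => (a n : ℚ_[p]) / p
  let S := (Rat.castHom ℚ_[p]).fieldRange
  have hα : ∀ n, α n ∈ S := fun n =>
    S.div_mem (by split_ifs <;> [exact S.one_mem; exact natCast_mem S q]) (natCast_mem S p)
  have hβ : ∀ n, β n ∈ S := fun n => S.div_mem (natCast_mem S _) (natCast_mem S p)
  have hα1 : ∀ n, 1 < ‖α n‖ := fun n => by
    have hp : (1 : ℝ) < p := by exact_mod_cast (Fact.out : p.Prime).one_lt
    simp only [α, norm_div, Padic.norm_p]
    split_ifs <;> simp [Padic.norm_natCast_eq_one_iff.mpr hpq, hp]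
  have hu := mem_of_eventually_periodic_affine_recurrence S hα hβ hα1 hT
    (hper.comp fun d => (if d = 0 then 1 else (q : ℚ_[p])) / p)
    (hper.comp fun d => (d : ℚ_[p]) / p)
    (v := fun n => ((g^[n] u : ℤ_[p]) : ℚ_[p]))
    (fun n => by rw [iterate_succ_apply']; exact coe_apply_eq_affine_in_digit hpq hg _)
    (C := 1) fun n => PadicInt.norm_le_one _
  simpa [S] using hu

/-- If `φ_{p,q}(u)` is rational then `u` is rational:
`φ_{p,q}⁻¹(ℚ ∩ ℤ_p) ⊆ ℚ ∩ ℤ_p`. -/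
theorem stmt2 (p q : ℕ) [Fact p.Prime] (hq : 0 < q) (hpq : Nat.Coprime p q)
    (g : ℤ_[p] → ℤ_[p])
    (hg : ∀ u : ℤ_[p], (p : ℤ_[p]) * g u =
      if (p : ℤ_[p]) ∣ u then u
      else (q : ℤ_[p]) * u + (eps0 (-((q : ℤ_[p]) * u)) : ℤ_[p]))
    (u : ℤ_[p])
    (h : ((phi p q g u : ℤ_[p]) : ℚ_[p]) ∈ Set.range ((↑) : ℚ → ℚ_[p])) :
    (u : ℚ_[p]) ∈ Set.range ((↑) : ℚ → ℚ_[p]) :=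
  stmt2_general p q hpq g hg u h
end

section
/- For every u ∈ ℤ_p, the series Σ_{i=0}^∞ ε₀(−q·u_i)·p^i·q^{−r_i(u)} converges in ℚ_p and u + Σ_{i=0}^∞ ε₀(−q·u_i)·p^i·q^{−r_i(u)} = 0 in ℚ_p. -/
/-! Put `a_n = p^n u_n q^{-r_{n-1}(u)}`, so that `a_0 = u`. The defining relation
`p g(v) = q^{[p ∤ v]} v + ε₀(-q v)` makes the `n`-th term of the series exactly `a_{n+1} - a_n`,
and `|a_n|_p ≤ p^{-n}` because `q` is a `p`-adic unit. Hence the series telescopes to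
`lim a_n - a_0 = -u`. -/

open scoped Classical

open scoped Classical in
/-- `r_n(u)`: the number of indices `0 ≤ i ≤ n` with `p ∤ g^i(u)`. -/
noncomputable def rcount (p : ℕ) [Fact p.Prime] (g : ℤ_[p] → ℤ_[p]) (u : ℤ_[p]) (n : ℕ) : ℕ :=
  ((Finset.range (n + 1)).filter fun i => ¬ (p : ℤ_[p]) ∣ g^[i] u).card

open Filter Topology

theorem NonarchimedeanAddGroup.hasSum_sub_of_tendsto {G : Type*} [AddCommGroup G]
    [UniformSpace G] [IsUniformAddGroup G] [NonarchimedeanAddGroup G] [CompleteSpace G]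
    [T2Space G] {a : ℕ → G} {l : G} (ha : Tendsto a atTop (𝓝 l)) :
    HasSum (fun n => a (n + 1) - a n) (l - a 0) := by
  have hdiff : Tendsto (fun n => a (n + 1) - a n) atTop (𝓝 0) := by
    simpa using ((tendsto_add_atTop_iff_nat 1).2 ha).sub ha
  have hsum : Summable fun n => a (n + 1) - a n :=
    NonarchimedeanAddGroup.summable_of_tendsto_cofinite_zero (Nat.cofinite_eq_atTop ▸ hdiff)
  rw [hsum.hasSum_iff_tendsto_nat]
  simpa only [Finset.sum_range_sub] using ha.sub_const (a 0)

lemma eps0_eq_zero_of_dvd {p : ℕ} [Fact p.Prime] {v : ℤ_[p]} (h : (p : ℤ_[p]) ∣ v) :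
    eps0 v = 0 := by
  obtain ⟨w, rfl⟩ := h
  rw [eps0, map_mul, map_natCast, ZMod.natCast_self, zero_mul, ZMod.val_zero]

section Expansion

variable {p : ℕ} [Fact p.Prime] (q : ℕ) (g : ℤ_[p] → ℤ_[p]) (u : ℤ_[p])

noncomputable def scaledIterate (n : ℕ) : ℚ_[p] :=
  (p : ℚ_[p]) ^ n * (g^[n] u : ℚ_[p]) /
    (q : ℚ_[p]) ^ Nat.count (fun i => ¬ (p : ℤ_[p]) ∣ g^[i] u) n

@[simp]
lemma scaledIterate_zero : scaledIterate q g u 0 = u := by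
  simp [scaledIterate]

lemma rcount_eq_count (n : ℕ) :
    rcount p g u n = Nat.count (fun i => ¬ (p : ℤ_[p]) ∣ g^[i] u) (n + 1) := by
  rw [rcount, Nat.count_eq_card_filter_range]

variable {q g}

lemma scaledIterate_succ_sub (hq : (q : ℚ_[p]) ≠ 0)
    (hg : ∀ v : ℤ_[p], (p : ℤ_[p]) * g v =
      if (p : ℤ_[p]) ∣ v then v
      else (q : ℤ_[p]) * v + (eps0 (-((q : ℤ_[p]) * v)) : ℤ_[p])) (n : ℕ) :
    scaledIterate q g u (n + 1) - scaledIterate q g u n =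
      (eps0 (-((q : ℤ_[p]) * g^[n] u)) : ℚ_[p]) * (p : ℚ_[p]) ^ n *
        ((q : ℚ_[p]) ^ rcount p g u n)⁻¹ := by
  have hstep := congrArg ((↑) : ℤ_[p] → ℚ_[p]) (hg (g^[n] u))
  rw [scaledIterate, scaledIterate, rcount_eq_count, Nat.count_succ,
    Function.iterate_succ_apply', pow_succ]
  by_cases h : (p : ℤ_[p]) ∣ g^[n] u
  · rw [if_pos h] at hstep
    rw [eps0_eq_zero_of_dvd (dvd_neg.2 (dvd_mul_of_dvd_right h _))]
    push_cast at hstep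
    simp only [h, not_true_eq_false, if_false, add_zero, Nat.cast_zero, zero_mul, ← hstep]
    ring
  · rw [if_neg h] at hstep
    push_cast at hstep
    simp only [h, not_false_eq_true, if_true, pow_succ]
    field_simp
    linear_combination (p : ℚ_[p]) ^ n * hstep

lemma norm_scaledIterate_le (hpq : Nat.Coprime p q) (n : ℕ) :
    ‖scaledIterate q g u n‖ ≤ (p : ℝ)⁻¹ ^ n := by
  have hq : ‖(q : ℚ_[p])‖ = 1 := Padic.norm_natCast_eq_one_iff.2 hpq
  rw [scaledIterate, norm_div, norm_mul, norm_pow, norm_pow, hq, one_pow, div_one, Padic.norm_p]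
  exact mul_le_of_le_one_right (by positivity) (PadicInt.norm_le_one _)

lemma tendsto_scaledIterate_zero (hpq : Nat.Coprime p q) :
    Tendsto (scaledIterate q g u) atTop (𝓝 0) :=
  squeeze_zero_norm (norm_scaledIterate_le u hpq)
    (tendsto_pow_atTop_nhds_zero_of_lt_one (by positivity)
      (inv_lt_one_of_one_lt₀ (mod_cast (Fact.out : p.Prime).one_lt)))

end Expansion

theorem stmt6_general (p q : ℕ) [Fact p.Prime] (hpq : Nat.Coprime p q)
    (g : ℤ_[p] → ℤ_[p])
    (hg : ∀ u : ℤ_[p], (p : ℤ_[p]) * g u =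
      if (p : ℤ_[p]) ∣ u then u
      else (q : ℤ_[p]) * u + (eps0 (-((q : ℤ_[p]) * u)) : ℤ_[p]))
    (u : ℤ_[p]) :
    Summable (fun i : ℕ =>
        (eps0 (-((q : ℤ_[p]) * g^[i] u)) : ℚ_[p]) * (p : ℚ_[p]) ^ i *
          ((q : ℚ_[p]) ^ rcount p g u i)⁻¹) ∧
      (u : ℚ_[p]) +
        (∑' i : ℕ,
          (eps0 (-((q : ℤ_[p]) * g^[i] u)) : ℚ_[p]) * (p : ℚ_[p]) ^ i *
            ((q : ℚ_[p]) ^ rcount p g u i)⁻¹) = 0 := by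
  have hq : (q : ℚ_[p]) ≠ 0 := norm_ne_zero_iff.1 (by simp [Padic.norm_natCast_eq_one_iff.2 hpq])
  have hsum :=
    NonarchimedeanAddGroup.hasSum_sub_of_tendsto (tendsto_scaledIterate_zero (g := g) u hpq)
  simp only [scaledIterate_succ_sub u hq hg, scaledIterate_zero, zero_sub] at hsum
  exact ⟨hsum.summable, by rw [hsum.tsum_eq, add_neg_cancel]⟩

/-- The series `Σ ε₀(-q u_i) p^i q^{-r_i(u)}` converges in `ℚ_p` and
`u + Σ_{i=0}^∞ ε₀(-q u_i) p^i q^{-r_i(u)} = 0`. -/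
theorem stmt6 (p q : ℕ) [Fact p.Prime] (hq : 0 < q) (hpq : Nat.Coprime p q)
    (g : ℤ_[p] → ℤ_[p])
    (hg : ∀ u : ℤ_[p], (p : ℤ_[p]) * g u =
      if (p : ℤ_[p]) ∣ u then u
      else (q : ℤ_[p]) * u + (eps0 (-((q : ℤ_[p]) * u)) : ℤ_[p]))
    (u : ℤ_[p]) :
    Summable (fun i : ℕ =>
        (eps0 (-((q : ℤ_[p]) * g^[i] u)) : ℚ_[p]) * (p : ℚ_[p]) ^ i *
          ((q : ℚ_[p]) ^ rcount p g u i)⁻¹) ∧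
      (u : ℚ_[p]) +
        (∑' i : ℕ,
          (eps0 (-((q : ℤ_[p]) * g^[i] u)) : ℚ_[p]) * (p : ℚ_[p]) ^ i *
            ((q : ℚ_[p]) ^ rcount p g u i)⁻¹) = 0 :=
  stmt6_general p q hpq g hg u
end

section
/- For every integer k ≥ 1, the set {u ∈ ℤ_p : g_{p,q}^k(u) = u} of k-periodic points of g_{p,q} has exactly p^k elements. -/
open scoped Classical

/-!
Each residue class mod `p` is mapped by `g_{p,q}` affinely, `u ↦ (c u + e) / p` with
`c ∈ {1, q}` a unit, so `g_{p,q}` multiplies distances within a residue class by `p`, and every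
point has exactly one preimage in each residue class. Hence a `k`-periodic point is determined
by its itinerary of residues `(g^i u mod p)_{i < k}` (the expansion would otherwise grow the
distance of two such points by `p^k` over one period), and every itinerary `s` is realised: the
composite of the inverse branches along `s` is a `p^{-k}`-contraction of the complete space
`ℤ_p`, whose fixed point is the required periodic point. So there are `p^k` of them.
-/

open Function NNReal PadicInt

namespace Function

variable {X α : Type*}

def itinerary (g : X → X) (res : X → α) (k : ℕ) (u : X) : Fin k → α :=
  fun i => res (g^[i] u)

variable [MetricSpace X] {g : X → X} {res : X → α} {K : ℝ≥0}

theorem IsPeriodicPt.eq_of_itinerary_eq (hK : 1 < K)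
    (hexp : ∀ a b, res a = res b → K * dist a b ≤ dist (g a) (g b))
    {k : ℕ} (hk : 1 ≤ k) {u v : X} (hu : IsPeriodicPt g k u) (hv : IsPeriodicPt g k v)
    (h : itinerary g res k u = itinerary g res k v) : u = v := by
  have hpow : ∀ i ≤ k, K ^ i * dist u v ≤ dist (g^[i] u) (g^[i] v) := by
    intro i hi
    induction i with
    | zero => simp
    | succ i ih =>
      have hres : res (g^[i] u) = res (g^[i] v) := congrFun h ⟨i, hi⟩
      calc (K : ℝ) ^ (i + 1) * dist u v = K * (K ^ i * dist u v) := by ring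
        _ ≤ K * dist (g^[i] u) (g^[i] v) := by gcongr; exact ih (by omega)
        _ ≤ dist (g^[i + 1] u) (g^[i + 1] v) := by
          rw [iterate_succ_apply', iterate_succ_apply']; exact hexp _ _ hres
  have hKk : (1 : ℝ) < K ^ k := one_lt_pow₀ (by exact_mod_cast hK) (by omega)
  have := hpow k le_rfl
  rw [hu.eq, hv.eq] at this
  exact dist_le_zero.mp (by nlinarith [dist_nonneg (x := u) (y := v)])

theorem exists_lipschitzWith_itinerary_eq (hK : 0 < K)
    (hexp : ∀ a b, res a = res b → K * dist a b ≤ dist (g a) (g b))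
    (hbranch : ∀ r w, ∃ u, res u = r ∧ g u = w) (k : ℕ) (s : Fin k → α) :
    ∃ F : X → X, LipschitzWith (K⁻¹ ^ k) F ∧
      ∀ w, g^[k] (F w) = w ∧ itinerary g res k (F w) = s := by
  choose G hGres hGg using hbranch
  have hGlip (r : α) : LipschitzWith K⁻¹ (G r) := by
    refine LipschitzWith.of_dist_le_mul fun w w' => ?_
    have := hexp _ _ ((hGres r w).trans (hGres r w').symm)
    rw [hGg, hGg] at this
    rw [NNReal.coe_inv, inv_mul_eq_div, le_div_iff₀' (by exact_mod_cast hK)]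
    exact this
  induction k with
  | zero =>
    exact ⟨id, by simpa using LipschitzWith.id, fun w => ⟨rfl, Subsingleton.elim _ _⟩⟩
  | succ k ih =>
    obtain ⟨F, hFlip, hF⟩ := ih (Fin.tail s)
    refine ⟨G (s 0) ∘ F, by rw [pow_succ']; exact (hGlip _).comp hFlip, fun w => ⟨?_, ?_⟩⟩
    · rw [comp_apply, iterate_succ_apply, hGg, (hF w).1]
    · funext i
      refine Fin.cases (hGres _ _) (fun i => ?_) i
      simp only [itinerary, comp_apply, Fin.val_succ, iterate_succ_apply, hGg]
      exact congrFun (hF w).2 i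

theorem itinerary_surjective [CompleteSpace X] [Nonempty X] (hK : 1 < K)
    (hexp : ∀ a b, res a = res b → K * dist a b ≤ dist (g a) (g b))
    (hbranch : ∀ r w, ∃ u, res u = r ∧ g u = w) {k : ℕ} (hk : 1 ≤ k) (s : Fin k → α) :
    ∃ u, IsPeriodicPt g k u ∧ itinerary g res k u = s := by
  obtain ⟨F, hFlip, hF⟩ :=
    exists_lipschitzWith_itinerary_eq (zero_lt_one.trans hK) hexp hbranch k s
  have hF_contracting : ContractingWith (K⁻¹ ^ k) F :=
    ⟨pow_lt_one₀ zero_le (inv_lt_one_of_one_lt₀ hK) (by omega), hFlip⟩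
  set u := ContractingWith.fixedPoint F hF_contracting
  have hu : F u = u := ContractingWith.fixedPoint_isFixedPt hF_contracting
  obtain ⟨hperiodic, hitinerary⟩ := hF u
  rw [hu] at hperiodic hitinerary
  exact ⟨u, hperiodic, hitinerary⟩

theorem ncard_setOf_isPeriodicPt [CompleteSpace X] [Nonempty X] [Finite α] (hK : 1 < K)
    (hexp : ∀ a b, res a = res b → K * dist a b ≤ dist (g a) (g b))
    (hbranch : ∀ r w, ∃ u, res u = r ∧ g u = w) {k : ℕ} (hk : 1 ≤ k) :
    {u | IsPeriodicPt g k u}.ncard = Nat.card α ^ k := by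
  have hbij : Bijective fun u : {u | IsPeriodicPt g k u} => itinerary g res k u := by
    refine ⟨fun u v h => Subtype.ext (u.2.eq_of_itinerary_eq hK hexp hk v.2 h), fun s => ?_⟩
    obtain ⟨u, hu, hus⟩ := itinerary_surjective hK hexp hbranch hk s
    exact ⟨⟨u, hu⟩, hus⟩
  rw [← Nat.card_coe_set_eq, Nat.card_eq_of_bijective _ hbij, Nat.card_fun, Nat.card_fin]

end Function

/-- The map `g_{p,q}`, characterised through `p * g u` so that no division is needed. -/
def IsGpq (p q : ℕ) [Fact p.Prime] (g : ℤ_[p] → ℤ_[p]) : Prop :=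
  ∀ u : ℤ_[p], (p : ℤ_[p]) * g u =
    if (p : ℤ_[p]) ∣ u then u else (q : ℤ_[p]) * u + (eps0 (-((q : ℤ_[p]) * u)) : ℤ_[p])

section

variable {p : ℕ} [Fact p.Prime]

theorem PadicInt.toZMod_eq_zero_iff_dvd {x : ℤ_[p]} : toZMod x = 0 ↔ (p : ℤ_[p]) ∣ x := by
  rw [← RingHom.mem_ker, ker_toZMod, maximalIdeal_eq_span_p, Ideal.mem_span_singleton]

theorem PadicInt.isUnit_natCast_of_coprime {q : ℕ} (hpq : p.Coprime q) : IsUnit (q : ℤ_[p]) :=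
  isUnit_iff.mpr (norm_natCast_eq_one_iff.mpr hpq)

variable {q : ℕ} {g : ℤ_[p] → ℤ_[p]}

theorem IsGpq.dist_map_eq_of_toZMod_eq (hg : IsGpq p q g) (hpq : p.Coprime q) {a b : ℤ_[p]}
    (hab : toZMod a = toZMod b) :
    dist (g a) (g b) = p * dist a b := by
  have hdvd : (p : ℤ_[p]) ∣ a ↔ (p : ℤ_[p]) ∣ b := by
    rw [← toZMod_eq_zero_iff_dvd, ← toZMod_eq_zero_iff_dvd, hab]
  obtain ⟨c, hc, hcab⟩ :
      ∃ c : ℤ_[p], ‖c‖ = 1 ∧ (p : ℤ_[p]) * (g a - g b) = c * (a - b) := by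
    by_cases ha : (p : ℤ_[p]) ∣ a
    · refine ⟨1, norm_one, ?_⟩
      rw [mul_sub, hg a, hg b, if_pos ha, if_pos (hdvd.mp ha), one_mul]
    · have heps : eps0 (-((q : ℤ_[p]) * a)) = eps0 (-((q : ℤ_[p]) * b)) := by
        simp only [eps0, map_neg, map_mul, hab]
      refine ⟨q, norm_natCast_eq_one_iff.mpr hpq, ?_⟩
      rw [mul_sub, hg a, hg b, if_neg ha, if_neg (mt hdvd.mpr ha), heps]
      ring
  have hp : (0 : ℝ) < p := by exact_mod_cast (Fact.out : p.Prime).pos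
  have := congrArg norm hcab
  rw [norm_mul, norm_mul, norm_p, hc, one_mul] at this
  rw [dist_eq_norm, dist_eq_norm, ← this]
  field_simp

theorem IsGpq.exists_toZMod_eq_and_map_eq (hg : IsGpq p q g) (hpq : p.Coprime q)
    (r : ZMod p) (w : ℤ_[p]) : ∃ u, toZMod u = r ∧ g u = w := by
  have hp : (p : ℤ_[p]) ≠ 0 := Nat.cast_ne_zero.mpr (Fact.out : p.Prime).ne_zero
  suffices ∃ u, toZMod u = r ∧ (p : ℤ_[p]) * g u = p * w from
    this.imp fun u ⟨hur, hu⟩ => ⟨hur, mul_left_cancel₀ hp hu⟩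
  by_cases hr : r = 0
  · refine ⟨p * w, ?_, ?_⟩
    · rw [hr, map_mul, map_natCast, ZMod.natCast_self, zero_mul]
    · rw [hg, if_pos (dvd_mul_right _ _)]
  set e : ℕ := (-((q : ZMod p) * r)).val
  have hq := isUnit_natCast_of_coprime hpq
  -- the preimage `(p w - e) / q`, where `e = ε₀(-q r)`
  obtain ⟨u, hu⟩ := hq.dvd (a := p * w - e)
  have hur : toZMod u = r := by
    have := congrArg toZMod hu
    rw [map_sub, map_mul, map_mul, map_natCast, map_natCast, map_natCast, ZMod.natCast_self,
      zero_mul, zero_sub, ZMod.natCast_zmod_val, neg_neg] at this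
    have hq' : IsUnit (q : ZMod p) := by simpa using hq.map (toZMod (p := p))
    exact (hq'.mul_left_cancel this).symm
  refine ⟨u, hur, ?_⟩
  have he : eps0 (-((q : ℤ_[p]) * u)) = e := by
    simp only [eps0, map_neg, map_mul, map_natCast, hur, e]
  rw [hg u, if_neg (by rwa [← toZMod_eq_zero_iff_dvd, hur]), he, ← hu, sub_add_cancel]

end

theorem stmt9_general (p q : ℕ) [Fact p.Prime] (hpq : Nat.Coprime p q)
    (g : ℤ_[p] → ℤ_[p])
    (hg : ∀ u : ℤ_[p], (p : ℤ_[p]) * g u =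
      if (p : ℤ_[p]) ∣ u then u
      else (q : ℤ_[p]) * u + (eps0 (-((q : ℤ_[p]) * u)) : ℤ_[p]))
    (k : ℕ) (hk : 1 ≤ k) :
    {u : ℤ_[p] | g^[k] u = u}.ncard = p ^ k := by
  have hexp (a b : ℤ_[p]) (hab : toZMod a = toZMod b) :
      (p : ℝ≥0) * dist a b ≤ dist (g a) (g b) := by
    rw [IsGpq.dist_map_eq_of_toZMod_eq hg hpq hab, NNReal.coe_natCast]
  have hp : 1 < (p : ℝ≥0) := by exact_mod_cast (Fact.out : p.Prime).one_lt
  have := ncard_setOf_isPeriodicPt hp hexp (IsGpq.exists_toZMod_eq_and_map_eq hg hpq) hk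
  rwa [Nat.card_zmod] at this

/-- For every `k ≥ 1`, the set of `k`-periodic points of `g_{p,q}` in `ℤ_p`
has exactly `p^k` elements. -/
theorem stmt9 (p q : ℕ) [Fact p.Prime] (hq : 0 < q) (hpq : Nat.Coprime p q)
    (g : ℤ_[p] → ℤ_[p])
    (hg : ∀ u : ℤ_[p], (p : ℤ_[p]) * g u =
      if (p : ℤ_[p]) ∣ u then u
      else (q : ℤ_[p]) * u + (eps0 (-((q : ℤ_[p]) * u)) : ℤ_[p]))
    (k : ℕ) (hk : 1 ≤ k) :
    {u : ℤ_[p] | g^[k] u = u}.ncard = p ^ k :=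
  stmt9_general p q hpq g hg k hk
end

section
/- For natural numbers k and ℓ, the equation 2^k − 3^ℓ = 1 holds if and only if (k, ℓ) = (1, 0) or (k, ℓ) = (2, 1). -/
/-! Modulo 8 the powers of 3 are `1` or `3`, so `3 ^ ℓ + 1` is never divisible by 8: hence
`k ≤ 2`, then `3 ^ ℓ ≤ 3` forces `ℓ ≤ 1`, and the remaining cases are checked by hand. -/

theorem Int.three_pow_emod_eight (n : ℕ) : (3 : ℤ) ^ n % 8 = 1 ∨ (3 : ℤ) ^ n % 8 = 3 := by
  induction n with
  | zero => left; norm_num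
  | succ n ih => rw [pow_succ]; omega

theorem le_two_of_two_pow_sub_three_pow_eq_one {k l : ℕ} (h : (2 : ℤ) ^ k - 3 ^ l = 1) :
    k ≤ 2 := by
  by_contra! hk
  obtain ⟨c, hc⟩ : (8 : ℤ) ∣ 2 ^ k := by simpa using pow_dvd_pow (2 : ℤ) hk
  have := Int.three_pow_emod_eight l
  omega

theorem le_one_of_two_pow_sub_three_pow_eq_one {k l : ℕ} (h : (2 : ℤ) ^ k - 3 ^ l = 1) :
    l ≤ 1 := by
  by_contra! hl
  have h9 : (3 : ℤ) ^ 2 ≤ 3 ^ l := pow_le_pow_right₀ (by norm_num) hl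
  have h4 : (2 : ℤ) ^ k ≤ 2 ^ 2 :=
    pow_le_pow_right₀ (by norm_num) (le_two_of_two_pow_sub_three_pow_eq_one h)
  omega

/-- For natural numbers `k`, `ℓ`: `2^k − 3^ℓ = 1` iff `(k, ℓ) = (1, 0)` or `(k, ℓ) = (2, 1)`. -/
theorem stmt10 (k l : ℕ) :
    (2 : ℤ) ^ k - 3 ^ l = 1 ↔ (k = 1 ∧ l = 0) ∨ (k = 2 ∧ l = 1) := by
  constructor
  · intro h
    have hk := le_two_of_two_pow_sub_three_pow_eq_one h
    have hl := le_one_of_two_pow_sub_three_pow_eq_one h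
    interval_cases k <;> interval_cases l <;> simp_all
  · rintro (⟨rfl, rfl⟩ | ⟨rfl, rfl⟩) <;> norm_num
end

section
/- For natural numbers k and ℓ, the equation 3^ℓ − 2^k = 1 holds if and only if (k, ℓ) = (1, 1) or (k, ℓ) = (3, 2). -/
/-! If `k ≥ 4`, then `3 ^ ℓ ≡ 1 [MOD 16]`, and since `3` has order `4` modulo `16` this forces
`4 ∣ ℓ`; but then `3 ^ 4 - 1 = 80` divides `3 ^ ℓ - 1 = 2 ^ k`, which is impossible because of the
factor `5`. For `k ≤ 3` we have `3 ^ ℓ ≤ 9`, leaving finitely many cases. -/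

lemma orderOf_three_zmod_sixteen : orderOf (3 : ZMod 16) = 4 :=
  orderOf_eq_iff (by norm_num) |>.mpr ⟨by decide, by decide⟩

lemma four_dvd_of_three_pow_eq_one_zmod_sixteen {l : ℕ} (h : (3 : ZMod 16) ^ l = 1) : 4 ∣ l :=
  orderOf_three_zmod_sixteen ▸ orderOf_dvd_of_pow_eq_one h

lemma five_dvd_three_pow_sub_one {l : ℕ} (hl : 4 ∣ l) : 5 ∣ 3 ^ l - 1 := by
  obtain ⟨m, rfl⟩ := hl
  rw [pow_mul, ← one_pow m]
  exact (by norm_num : 5 ∣ 3 ^ 4 - 1).trans (Nat.sub_dvd_pow_sub_pow _ _ m)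

lemma lt_four_of_three_pow_eq_two_pow_add_one {k l : ℕ} (h : 3 ^ l = 2 ^ k + 1) : k < 4 := by
  by_contra! hk
  have h16 : (3 : ZMod 16) ^ l = 1 := by
    have h2k : (2 : ZMod 16) ^ k = 0 := by
      obtain ⟨m, rfl⟩ := Nat.exists_eq_add_of_le hk
      rw [pow_add, show (2 : ZMod 16) ^ 4 = 0 by decide, zero_mul]
    simpa [h2k] using congrArg (Nat.cast : ℕ → ZMod 16) h
  have h5 : 5 ∣ 2 ^ k := by
    simpa [h] using five_dvd_three_pow_sub_one (four_dvd_of_three_pow_eq_one_zmod_sixteen h16)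
  exact absurd (Nat.prime_five.dvd_of_dvd_pow h5) (by norm_num)

lemma eq_of_three_pow_eq_two_pow_add_one {k l : ℕ} (h : 3 ^ l = 2 ^ k + 1) :
    k = 1 ∧ l = 1 ∨ k = 3 ∧ l = 2 := by
  have hk := lt_four_of_three_pow_eq_two_pow_add_one h
  have hl : l < 3 := by
    have : 2 ^ k ≤ 2 ^ 3 := Nat.pow_le_pow_right two_pos (by omega)
    exact (Nat.pow_lt_pow_iff_right (by norm_num)).mp (by omega : 3 ^ l < 3 ^ 3)
  interval_cases k <;> interval_cases l <;> simp_all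

/-- For natural numbers `k`, `ℓ`: `3^ℓ − 2^k = 1` iff `(k, ℓ) = (1, 1)` or `(k, ℓ) = (3, 2)`. -/
theorem stmt11 (k l : ℕ) :
    (3 : ℤ) ^ l - 2 ^ k = 1 ↔ (k = 1 ∧ l = 1) ∨ (k = 3 ∧ l = 2) := by
  have hcast : (3 : ℤ) ^ l - 2 ^ k = 1 ↔ 3 ^ l = 2 ^ k + 1 := by
    rw [sub_eq_iff_eq_add, add_comm]
    norm_cast
  rw [hcast]
  refine ⟨eq_of_three_pow_eq_two_pow_add_one, ?_⟩
  rintro (⟨rfl, rfl⟩ | ⟨rfl, rfl⟩) <;> rfl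
end

section
/- Let u ∈ ℤ_p be rational, so that every iterate u_n = g_{p,q}^n(u) is rational. The sequence (u_n)_{n∈ℕ} fails to be ultimately periodic if and only if the archimedean absolute values |u_n|_∞ of the rational numbers u_n tend to +∞ as n → ∞. -/
open scoped Classical

/-!
Since `p · g(w) = c w + e` with integers `c, e`, and every iterate lies in `ℤ_p` (so `p` never
divides a denominator), the denominators of the rational iterates `u_n` all divide that of `u`.
Hence the `u_n` lie in the lattice `(1/d)ℤ`. An orbit that is not ultimately periodic never
repeats a point, and an injective sequence in `(1/d)ℤ` leaves every bounded set; an ultimately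
periodic one takes some value infinitely often.
-/

open Filter Function

def UltimatelyPeriodic {α : Type*} (x : ℕ → α) : Prop :=
  ∃ n₀ : ℕ, ∃ k ≥ 1, ∀ n ≥ n₀, x (n + k) = x n

namespace UltimatelyPeriodic

variable {α : Type*} {x : ℕ → α}

theorem of_eq_imp {β : Type*} {y : ℕ → β} (hx : UltimatelyPeriodic x)
    (h : ∀ m n, x m = x n → y m = y n) : UltimatelyPeriodic y := by
  obtain ⟨n₀, k, hk, hper⟩ := hx
  exact ⟨n₀, k, hk, fun n hn => h _ _ (hper n hn)⟩

theorem frequently_eq (hx : UltimatelyPeriodic x) : ∃ a, ∃ᶠ n in atTop, x n = a := by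
  obtain ⟨n₀, k, hk, hper⟩ := hx
  have hmul : ∀ j, x (n₀ + j * k) = x n₀ := by
    intro j
    induction j with
    | zero => simp
    | succ j ih => rw [add_mul, one_mul, ← add_assoc, hper _ (by omega), ih]
  exact ⟨x n₀, frequently_atTop.2 fun N => ⟨n₀ + N * k, by nlinarith, hmul N⟩⟩

theorem not_tendsto_atTop [Preorder α] [NoMaxOrder α] (hx : UltimatelyPeriodic x) :
    ¬ Tendsto x atTop atTop := by
  intro htend
  obtain ⟨a, hfreq⟩ := hx.frequently_eq
  obtain ⟨n, hgt, heq⟩ := ((htend.eventually_gt_atTop a).and_frequently hfreq).exists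
  exact (heq ▸ hgt).false

end UltimatelyPeriodic

theorem Function.ultimatelyPeriodic_iterate_of_eq {α : Type*} {g : α → α} {u : α} {m n : ℕ}
    (hmn : m < n) (h : g^[m] u = g^[n] u) : UltimatelyPeriodic (fun t => g^[t] u) := by
  refine ⟨m, n - m, by omega, fun t ht => ?_⟩
  obtain ⟨s, rfl⟩ := Nat.exists_eq_add_of_le ht
  calc g^[m + s + (n - m)] u = g^[s] (g^[n] u) := by
        rw [← iterate_add_apply]; congr 1; omega
    _ = g^[m + s] u := by rw [← h, ← iterate_add_apply, add_comm]

theorem Function.injective_iterate_of_not_ultimatelyPeriodic {α : Type*} {g : α → α} {u : α}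
    (h : ¬ UltimatelyPeriodic (fun t => g^[t] u)) : Injective (fun t => g^[t] u) := by
  intro m n hmn
  by_contra hne
  rcases Nat.lt_or_gt_of_ne hne with hlt | hlt
  exacts [h (ultimatelyPeriodic_iterate_of_eq hlt hmn),
    h (ultimatelyPeriodic_iterate_of_eq hlt hmn.symm)]

theorem Int.tendsto_abs_cofinite_atTop_of_injective {ι : Type*} {w : ι → ℤ} (hw : Injective w) :
    Tendsto (fun i => |w i|) cofinite atTop := by
  have hcof : Tendsto w cofinite (atBot ⊔ atTop) := Int.cofinite_eq ▸ hw.tendsto_cofinite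
  exact (tendsto_abs_atBot_atTop.sup tendsto_abs_atTop_atTop).comp hcof

theorem Rat.den_dvd_iff_exists_mul_eq_intCast {x : ℚ} {d : ℕ} :
    x.den ∣ d ↔ ∃ z : ℤ, x * d = z := by
  constructor
  · rintro ⟨k, rfl⟩
    exact ⟨x.num * k, by push_cast; rw [← mul_assoc, Rat.mul_den_eq_num]⟩
  · rintro ⟨z, hz⟩
    rcases eq_or_ne d 0 with rfl | hd
    · exact dvd_zero _
    have hx : x = Rat.divInt z d := by
      rw [Rat.divInt_eq_div, ← hz]; push_cast; field_simp
    exact_mod_cast hx ▸ Rat.den_dvd z d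

theorem Rat.tendsto_abs_cofinite_atTop_of_injective {ι : Type*} {v : ι → ℚ} {d : ℕ}
    (hd : d ≠ 0) (hv : Injective v) (hden : ∀ i, (v i).den ∣ d) :
    Tendsto (fun i => |v i|) cofinite atTop := by
  choose w hw using fun i => Rat.den_dvd_iff_exists_mul_eq_intCast.1 (hden i)
  have hd' : (0 : ℚ) < d := by positivity
  have hw_inj : Injective w := fun i j hij =>
    hv (mul_right_cancel₀ hd'.ne' (by rw [hw, hw, hij]))
  have hlim := (tendsto_intCast_atTop_iff.2
    (Int.tendsto_abs_cofinite_atTop_of_injective hw_inj)).atTop_div_const hd'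
  refine hlim.congr fun i => ?_
  rw [Int.cast_abs, ← hw, abs_mul, Nat.abs_cast, mul_div_cancel_right₀ _ hd'.ne']

theorem Rat.den_dvd_den_of_prime_mul_eq {p : ℕ} [Fact p.Prime] {x y : ℚ} {c e : ℤ}
    (hy : ‖(y : ℚ_[p])‖ ≤ 1) (h : p * y = c * x + e) : y.den ∣ x.den := by
  have hp_not_dvd : ¬ p ∣ y.den := Rat.padicValuation_le_one_iff.1
    ((Padic.norm_rat_le_one_iff_padicValuation_le_one p).1 hy)
  have hcop : y.den.Coprime p := ((Nat.Prime.coprime_iff_not_dvd Fact.out).2 hp_not_dvd).symm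
  refine hcop.dvd_of_dvd_mul_right
    (Rat.den_dvd_iff_exists_mul_eq_intCast.2 ⟨c * x.num + e * x.den, ?_⟩)
  push_cast
  rw [← Rat.mul_den_eq_num]
  linear_combination (x.den : ℚ) * h

theorem Rat.den_dvd_den_zero_of_prime_mul_succ {p : ℕ} [Fact p.Prime] {v : ℕ → ℚ}
    (hv : ∀ n, ‖(v n : ℚ_[p])‖ ≤ 1) (hstep : ∀ n, ∃ c e : ℤ, p * v (n + 1) = c * v n + e)
    (n : ℕ) : (v n).den ∣ (v 0).den := by
  induction n with
  | zero => exact dvd_rfl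
  | succ n ih =>
    obtain ⟨c, e, h⟩ := hstep n
    exact (Rat.den_dvd_den_of_prime_mul_eq (hv (n + 1)) h).trans ih

theorem stmt15_general (p q : ℕ) [Fact p.Prime]
    (g : ℤ_[p] → ℤ_[p])
    (hg : ∀ u : ℤ_[p], (p : ℤ_[p]) * g u =
      if (p : ℤ_[p]) ∣ u then u
      else (q : ℤ_[p]) * u + (eps0 (-((q : ℤ_[p]) * u)) : ℤ_[p]))
    (u : ℤ_[p]) (v : ℕ → ℚ)
    (hv : ∀ n : ℕ, ((v n : ℚ) : ℚ_[p]) = ((g^[n] u : ℤ_[p]) : ℚ_[p])) :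
    (¬ ∃ n₀ : ℕ, ∃ k ≥ 1, ∀ n ≥ n₀, g^[n + k] u = g^[n] u) ↔
      Filter.Tendsto (fun n : ℕ => |v n|) Filter.atTop Filter.atTop := by
  have hv_eq : ∀ m n, v m = v n ↔ g^[m] u = g^[n] u := fun m n => by
    rw [← Rat.cast_inj (α := ℚ_[p]), hv, hv]
    exact Subtype.coe_injective.eq_iff
  have hstep : ∀ n, ∃ c e : ℤ, p * v (n + 1) = c * v n + e := by
    intro n
    obtain ⟨c, e, h⟩ : ∃ c e : ℤ, (p : ℤ_[p]) * g (g^[n] u) = c * g^[n] u + e := by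
      rw [hg]
      split_ifs
      exacts [⟨1, 0, by simp⟩, ⟨q, eps0 (-((q : ℤ_[p]) * g^[n] u)), by push_cast; rfl⟩]
    refine ⟨c, e, Rat.cast_injective (α := ℚ_[p]) ?_⟩
    push_cast
    rw [hv, hv, iterate_succ_apply']
    exact_mod_cast congrArg ((↑) : ℤ_[p] → ℚ_[p]) h
  have hden := Rat.den_dvd_den_zero_of_prime_mul_succ
    (fun n => hv n ▸ PadicInt.norm_le_one _) hstep
  change ¬ UltimatelyPeriodic (fun t => g^[t] u) ↔ _
  constructor
  · intro hper
    rw [← Nat.cofinite_eq_atTop]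
    exact Rat.tendsto_abs_cofinite_atTop_of_injective (v 0).den_nz
      (fun m n h => injective_iterate_of_not_ultimatelyPeriodic hper ((hv_eq m n).1 h)) hden
  · intro htend hper
    exact (hper.of_eq_imp fun m n h => congrArg abs ((hv_eq m n).2 h)).not_tendsto_atTop htend

/-- Let `u ∈ ℤ_p` be rational, with `v n ∈ ℚ` the rational number equal to the iterate
`g^n(u)`. The orbit of `u` fails to be ultimately periodic iff `|v n|_∞ → +∞`. -/
theorem stmt15 (p q : ℕ) [Fact p.Prime] (hq : 0 < q) (hpq : Nat.Coprime p q)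
    (g : ℤ_[p] → ℤ_[p])
    (hg : ∀ u : ℤ_[p], (p : ℤ_[p]) * g u =
      if (p : ℤ_[p]) ∣ u then u
      else (q : ℤ_[p]) * u + (eps0 (-((q : ℤ_[p]) * u)) : ℤ_[p]))
    (u : ℤ_[p]) (v : ℕ → ℚ)
    (hv : ∀ n : ℕ, ((v n : ℚ) : ℚ_[p]) = ((g^[n] u : ℤ_[p]) : ℚ_[p])) :
    (¬ ∃ n₀ : ℕ, ∃ k ≥ 1, ∀ n ≥ n₀, g^[n + k] u = g^[n] u) ↔
      Filter.Tendsto (fun n : ℕ => |v n|) Filter.atTop Filter.atTop :=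
  stmt15_general p q g hg u v hv
end

section
/- Let u ∈ ℤ_p be rational with φ_{p,q}(u) not rational (so that there are infinitely many indices i with p ∤ u_i and ψ is well defined). Then limsup_{n→∞} (p^{ψ(n+1)}·|u_{ψ(n+1)}|_∞)^{1/n} = q; that is, the real power series S_u(T) = Σ_{n=0}^∞ p^{ψ(n+1)}·u_{ψ(n+1)}·T^n has radius of convergence 1/q for the archimedean metric. -/
open scoped Classical

/-!
Put `w n = p ^ n * u_n`. The defining relation of `g` gives `w (n + 1) = w n` when `p ∣ u_n`
and `w (n + 1) = q * w n + ε₀ * p ^ n` otherwise, so along `ψ` the coefficients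
`a m = w (ψ m)` satisfy `|a (m + 1) - q * a m| ≤ p ^ (ψ m + 1)`, and `|a (m + 1)| / |a m| → q`
as soon as `|u_{ψ m}|_∞ → ∞`. That holds because the `u_n` are rationals of bounded
denominator (each is `p`-integral and `p * u_{n+1}` is an integral combination of `u_n` and `1`)
and pairwise distinct (a repetition makes the digits of `φ(u)` eventually periodic, so `φ(u)`
rational). The ratio test gives the radius `1 / q`; Cesàro's theorem applied to the logarithms
of the ratios gives the limit of the `n`-th roots.
-/

open Filter Topology Finset

theorem tendsto_abs_rpow_inv_of_tendsto_abs_div {c : ℕ → ℝ} {q : ℝ} (hq : 0 < q)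
    (hc : ∀ n, c n ≠ 0) (h : Tendsto (fun n => |c (n + 1)| / |c n|) atTop (𝓝 q)) :
    Tendsto (fun n : ℕ => |c n| ^ (n : ℝ)⁻¹) atTop (𝓝 q) := by
  have hpos n : 0 < |c n| := abs_pos.2 (hc n)
  have hsum n : ∑ i ∈ range n, Real.log (|c (i + 1)| / |c i|)
      = Real.log |c n| - Real.log |c 0| := by
    simp only [Real.log_div (hpos _).ne' (hpos _).ne']
    exact sum_range_sub (fun k => Real.log |c k|) n
  -- Cesàro averages of the logarithms of the ratios telescope to `log |c n| / n`.
  have hces := (h.log hq.ne').cesaro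
  simp only [hsum, mul_sub] at hces
  have hlog : Tendsto (fun n : ℕ => (n : ℝ)⁻¹ * Real.log |c n|) atTop (𝓝 (Real.log q)) := by
    have h0 := (tendsto_inv_atTop_zero.comp tendsto_natCast_atTop_atTop).mul_const
      (Real.log |c 0|)
    rw [zero_mul] at h0
    simpa using hces.add h0
  have := (Real.continuous_exp.tendsto _).comp hlog
  rw [Real.exp_log hq] at this
  refine this.congr fun n => ?_
  rw [Function.comp_apply, Real.rpow_def_of_pos (hpos n), mul_comm]

theorem tendsto_abs_div_of_abs_sub_mul_le {a b : ℕ → ℝ} {q : ℝ} (hq : 0 ≤ q)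
    (ha : ∀ n, a n ≠ 0) (hab : ∀ n, |a (n + 1) - q * a n| ≤ b n)
    (hb : Tendsto (fun n => b n / |a n|) atTop (𝓝 0)) :
    Tendsto (fun n => |a (n + 1)| / |a n|) atTop (𝓝 q) := by
  rw [tendsto_iff_norm_sub_tendsto_zero]
  refine squeeze_zero (fun n => norm_nonneg _) (fun n => ?_) hb
  have hpos : 0 < |a n| := abs_pos.2 (ha n)
  calc ‖|a (n + 1)| / |a n| - q‖ = |(|a (n + 1)| - |a n| * q)| / |a n| := by
        rw [Real.norm_eq_abs, div_sub' hpos.ne', abs_div, abs_abs]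
    _ ≤ b n / |a n| := by
        gcongr
        rw [← abs_of_nonneg hq, ← abs_mul, mul_comm]
        exact (abs_abs_sub_abs_le_abs_sub _ _).trans (hab n)

theorem tendsto_abs_atTop_of_injective {v : ℕ → ℚ} (hv : Function.Injective v) {d : ℕ}
    (hd : d ≠ 0) (hz : ∀ n, ∃ z : ℤ, v n * d = z) :
    Tendsto (fun n => |(v n : ℝ)|) atTop atTop := by
  choose z hz using hz
  have hvz n : |(v n : ℝ)| = ‖z n‖ / d := by
    rw [eq_div_iff (Nat.cast_ne_zero.2 hd), Int.norm_eq_abs, ← Nat.abs_cast, ← abs_mul]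
    exact_mod_cast congrArg abs (hz n)
  have hzinj : Function.Injective z := fun m n h => hv <| by
    have := hz m
    rw [h, ← hz n] at this
    exact mul_right_cancel₀ (Nat.cast_ne_zero.2 hd) this
  have hzlim : Tendsto (fun n => ‖z n‖) atTop atTop := by
    rw [← Nat.cofinite_eq_atTop]
    refine tendsto_norm_cocompact_atTop.comp ?_
    rw [cocompact_eq_cofinite]
    exact hzinj.tendsto_cofinite
  simp only [hvz]
  exact hzlim.atTop_div_const (by positivity)

section Padic

variable {p : ℕ} [Fact p.Prime]

theorem summable_mul_prime_pow (a : ℕ → ℤ_[p]) : Summable fun n => a n * (p : ℤ_[p]) ^ n := by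
  have hp : (p : ℝ)⁻¹ < 1 := inv_lt_one_of_one_lt₀ (Nat.one_lt_cast.2 (Fact.out : p.Prime).one_lt)
  refine Summable.of_norm_bounded (summable_geometric_of_lt_one (by positivity) hp) fun n => ?_
  rw [norm_mul, norm_pow, PadicInt.norm_p]
  exact mul_le_of_le_one_left (by positivity) (PadicInt.norm_le_one _)

theorem exists_int_eq_of_mul_prime_eq_int {x : ℚ} {k : ℤ} (hk : p * x = k)
    (hx : ‖(x : ℚ_[p])‖ ≤ 1) : ∃ z : ℤ, x = z := by
  have hp : ‖(k : ℚ_[p])‖ < 1 := by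
    rw [← Rat.cast_intCast, ← hk, Rat.cast_mul, Rat.cast_natCast, norm_mul, Padic.norm_p]
    exact (mul_le_of_le_one_right (by positivity) hx).trans_lt
      (inv_lt_one_of_one_lt₀ (Nat.one_lt_cast.2 (Fact.out : p.Prime).one_lt))
  obtain ⟨z, rfl⟩ := Padic.norm_intCast_lt_one_iff.1 hp
  refine ⟨z, mul_left_cancel₀ (Nat.cast_ne_zero.2 (Fact.out : p.Prime).ne_zero) ?_⟩
  rw [hk]
  push_cast
  ring

end Padic

section Phi

variable {p : ℕ} [Fact p.Prime] (q : ℕ) (g : ℤ_[p] → ℤ_[p])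

theorem phi_eq_add_mul_phi (x : ℤ_[p]) :
    phi p q g x = eps0 (-((q : ℤ_[p]) * x)) + p * phi p q g (g x) := by
  rw [phi, (summable_mul_prime_pow _).tsum_eq_zero_add, phi,
    ← (summable_mul_prime_pow _).tsum_mul_left]
  simp only [Function.iterate_zero_apply, pow_zero, mul_one, Function.iterate_succ_apply, pow_succ]
  congr 1
  exact tsum_congr fun n => by ring

theorem phi_eq_sum_add_pow_mul_phi_iterate (x : ℤ_[p]) (N : ℕ) :
    phi p q g x = ∑ n ∈ range N, (eps0 (-((q : ℤ_[p]) * g^[n] x)) : ℤ_[p]) * (p : ℤ_[p]) ^ n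
      + p ^ N * phi p q g (g^[N] x) := by
  induction N with
  | zero => simp
  | succ N ih =>
    rw [ih, phi_eq_add_mul_phi q g (g^[N] x), ← Function.iterate_succ_apply' g N x,
      sum_range_succ]
    ring

theorem phi_mem_range_ratCast_of_iterate_add_eq (x : ℤ_[p]) {N T : ℕ} (hT : T ≠ 0)
    (h : g^[N + T] x = g^[N] x) :
    ((phi p q g x : ℤ_[p]) : ℚ_[p]) ∈ Set.range ((↑) : ℚ → ℚ_[p]) := by
  have hx := congrArg ((↑) : ℤ_[p] → ℚ_[p]) (phi_eq_sum_add_pow_mul_phi_iterate q g x N)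
  set y := g^[N] x
  have hy : g^[T] y = y := by rw [← Function.iterate_add_apply, add_comm, h]
  have hy' := congrArg ((↑) : ℤ_[p] → ℚ_[p]) (phi_eq_sum_add_pow_mul_phi_iterate q g y T)
  rw [hy] at hy'
  push_cast [PadicInt.coe_sum] at hx hy'
  let digits (z : ℤ_[p]) (k : ℕ) : ℚ :=
    ∑ n ∈ range k, (eps0 (-((q : ℤ_[p]) * g^[n] z)) : ℚ) * (p : ℚ) ^ n
  have hne : (1 - (p : ℚ) ^ T) ≠ 0 :=
    sub_ne_zero.2 (one_lt_pow₀ (Nat.one_lt_cast.2 (Fact.out : p.Prime).one_lt) hT).ne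
  have hφy : (phi p q g y : ℚ_[p]) = (digits y T : ℚ_[p]) / (1 - (p : ℚ_[p]) ^ T) := by
    rw [eq_div_iff (by exact_mod_cast hne)]
    push_cast [digits]
    linear_combination hy'
  refine ⟨digits x N + p ^ N * (digits y T / (1 - p ^ T)), ?_⟩
  rw [hx, hφy]
  push_cast [digits]
  rfl

end Phi

theorem iterate_injective_of_phi_notMem_range {p : ℕ} [Fact p.Prime] {q : ℕ}
    {g : ℤ_[p] → ℤ_[p]} {x : ℤ_[p]}
    (hirr : ((phi p q g x : ℤ_[p]) : ℚ_[p]) ∉ Set.range ((↑) : ℚ → ℚ_[p])) :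
    Function.Injective fun n => g^[n] x := by
  have key {m n : ℕ} (hmn : m < n) (h : g^[m] x = g^[n] x) : False :=
    hirr <| phi_mem_range_ratCast_of_iterate_add_eq q g x (Nat.sub_ne_zero_of_lt hmn)
      (by rw [Nat.add_sub_cancel' hmn.le, h])
  intro m n h
  rcases lt_trichotomy m n with hmn | rfl | hnm
  exacts [(key hmn h).elim, rfl, (key hnm h.symm).elim]

theorem prime_mul_rat_iterate_succ {p : ℕ} [Fact p.Prime] {q : ℕ} {g : ℤ_[p] → ℤ_[p]}
    {u : ℤ_[p]} {v : ℕ → ℚ}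
    (hg : ∀ u : ℤ_[p], (p : ℤ_[p]) * g u =
      if (p : ℤ_[p]) ∣ u then u else (q : ℤ_[p]) * u + (eps0 (-((q : ℤ_[p]) * u)) : ℤ_[p]))
    (hv : ∀ n : ℕ, ((v n : ℚ) : ℚ_[p]) = ((g^[n] u : ℤ_[p]) : ℚ_[p])) (n : ℕ) :
    (p : ℚ) * v (n + 1) = if (p : ℤ_[p]) ∣ g^[n] u then v n
      else q * v n + eps0 (-((q : ℤ_[p]) * g^[n] u)) := by
  apply Rat.cast_injective (α := ℚ_[p])
  have h := congrArg ((↑) : ℤ_[p] → ℚ_[p]) (hg (g^[n] u))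
  rw [← Function.iterate_succ_apply' g n u] at h
  split_ifs at h ⊢ <;> (push_cast [hv]; exact h)

section Recurrence

variable {p q : ℕ} {P : ℕ → Prop} {e : ℕ → ℕ} {v : ℕ → ℚ}

theorem exists_mul_den_eq_int [Fact p.Prime]
    (hrec : ∀ n, (p : ℚ) * v (n + 1) = if P n then v n else q * v n + e n)
    (hint : ∀ n, ‖(v n : ℚ_[p])‖ ≤ 1) (n : ℕ) : ∃ z : ℤ, v n * (v 0).den = z := by
  induction n with
  | zero => exact ⟨(v 0).num, Rat.mul_den_eq_num (v 0)⟩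
  | succ n ih =>
    obtain ⟨z, hz⟩ := ih
    refine exists_int_eq_of_mul_prime_eq_int (p := p)
      (k := if P n then z else q * z + e n * (v 0).den) ?_ ?_
    · rw [← mul_assoc, hrec n]
      split_ifs <;> push_cast [← hz] <;> ring
    · push_cast
      rw [norm_mul]
      exact mul_le_one₀ (hint _) (norm_nonneg _) (IsUltrametricDist.norm_natCast_le_one ℚ_[p] _)

theorem pow_mul_succ_eq (hrec : ∀ n, (p : ℚ) * v (n + 1) = if P n then v n else q * v n + e n)
    (n : ℕ) :
    (p : ℝ) ^ (n + 1) * v (n + 1) =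
      if P n then (p : ℝ) ^ n * v n else q * ((p : ℝ) ^ n * v n) + e n * (p : ℝ) ^ n := by
  calc (p : ℝ) ^ (n + 1) * v (n + 1) = (p : ℝ) ^ n * ((p * v (n + 1) : ℚ) : ℝ) := by
        push_cast; ring
    _ = _ := by rw [hrec n]; split_ifs <;> push_cast <;> ring

theorem pow_mul_eq_of_forall_Ioo
    (hrec : ∀ n, (p : ℚ) * v (n + 1) = if P n then v n else q * v n + e n) {a b : ℕ}
    (hab : a < b) (ha : ¬ P a) (hP : ∀ i, a < i → i < b → P i) :
    (p : ℝ) ^ b * v b = q * ((p : ℝ) ^ a * v a) + e a * (p : ℝ) ^ a := by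
  induction b, hab using Nat.le_induction with
  | base => rw [pow_mul_succ_eq hrec, if_neg ha]
  | succ b hab ih =>
    rw [pow_mul_succ_eq hrec, if_pos (hP b hab (Nat.lt_succ_self b)),
      ih fun i hai hib => hP i hai (hib.trans (Nat.lt_succ_self b))]

end Recurrence

theorem tendsto_abs_pow_mul_div_of_recurrence {p q : ℕ} {P : ℕ → Prop} {e : ℕ → ℕ} {v : ℕ → ℚ}
    (hp : p ≠ 0) (hrec : ∀ n, (p : ℚ) * v (n + 1) = if P n then v n else q * v n + e n)
    (he : ∀ n, e n ≤ p) {ψ : ℕ → ℕ} (hψmono : StrictMono ψ) (hψmem : ∀ n, ¬ P (ψ n))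
    (hψall : ∀ i, ¬ P i → ∃ n, ψ n = i) (hv : ∀ n, v (ψ n) ≠ 0)
    (hlim : Tendsto (fun n => |(v (ψ n) : ℝ)|) atTop atTop) :
    Tendsto (fun n => |(p : ℝ) ^ ψ (n + 1) * v (ψ (n + 1))| / |(p : ℝ) ^ ψ n * v (ψ n)|)
      atTop (𝓝 q) := by
  have hp' : (0 : ℝ) < p := Nat.cast_pos.2 (Nat.pos_of_ne_zero hp)
  have hgap n : ∀ i, ψ n < i → i < ψ (n + 1) → P i := fun i h₁ h₂ => by
    by_contra hi
    obtain ⟨k, rfl⟩ := hψall i hi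
    have := hψmono.lt_iff_lt.1 h₁
    have := hψmono.lt_iff_lt.1 h₂
    omega
  refine tendsto_abs_div_of_abs_sub_mul_le (b := fun n => p * (p : ℝ) ^ ψ n) q.cast_nonneg
    (fun n => mul_ne_zero (pow_ne_zero _ hp'.ne') (Rat.cast_ne_zero.2 (hv n))) (fun n => ?_) ?_
  · rw [pow_mul_eq_of_forall_Ioo hrec (hψmono n.lt_succ_self) (hψmem n) (hgap n),
      add_sub_cancel_left, abs_of_nonneg (by positivity)]
    gcongr
    exact_mod_cast he _
  · have h n : p * (p : ℝ) ^ ψ n / |(p : ℝ) ^ ψ n * v (ψ n)| = p / |(v (ψ n) : ℝ)| := by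
      rw [abs_mul, abs_of_pos (pow_pos hp' _), mul_comm (p : ℝ), mul_div_mul_left _ _
        (pow_ne_zero _ hp'.ne')]
    simp only [h]
    exact tendsto_const_nhds.div_atTop hlim

theorem stmt17_general (p q : ℕ) [Fact p.Prime] (hq : 0 < q)
    (g : ℤ_[p] → ℤ_[p])
    (hg : ∀ u : ℤ_[p], (p : ℤ_[p]) * g u =
      if (p : ℤ_[p]) ∣ u then u
      else (q : ℤ_[p]) * u + (eps0 (-((q : ℤ_[p]) * u)) : ℤ_[p]))
    (u : ℤ_[p]) (v : ℕ → ℚ)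
    (hv : ∀ n : ℕ, ((v n : ℚ) : ℚ_[p]) = ((g^[n] u : ℤ_[p]) : ℚ_[p]))
    (hirr : ((phi p q g u : ℤ_[p]) : ℚ_[p]) ∉ Set.range ((↑) : ℚ → ℚ_[p]))
    (ψ : ℕ → ℕ) (hψmono : StrictMono ψ)
    (hψmem : ∀ n, ¬ (p : ℤ_[p]) ∣ g^[ψ n] u)
    (hψall : ∀ i, ¬ (p : ℤ_[p]) ∣ g^[i] u → ∃ n, ψ n = i) :
    Filter.limsup
      (fun n : ℕ =>
        ((p : ℝ) ^ ψ (n + 1) * |((v (ψ (n + 1)) : ℚ) : ℝ)|) ^ ((n : ℝ)⁻¹))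
      Filter.atTop = (q : ℝ) ∧
    (FormalMultilinearSeries.ofScalars ℝ
        (fun n : ℕ => (p : ℝ) ^ ψ (n + 1) * ((v (ψ (n + 1)) : ℚ) : ℝ))).radius
      = ((q : ENNReal))⁻¹ := by
  have hp := (Fact.out : p.Prime).ne_zero
  have hrec := prime_mul_rat_iterate_succ hg hv
  have hint n : ‖(v n : ℚ_[p])‖ ≤ 1 := by rw [hv]; exact PadicInt.norm_le_one _
  have hinj : Function.Injective v := fun m n h =>
    iterate_injective_of_phi_notMem_range hirr (Subtype.ext ((hv m).symm.trans (h ▸ hv n)))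
  have hlim := (tendsto_abs_atTop_of_injective hinj (v 0).den_nz
    (exists_mul_den_eq_int hrec hint)).comp hψmono.tendsto_atTop
  have hv0 n : v (ψ n) ≠ 0 := fun h0 => hψmem n <| by
    rw [PadicInt.coe_eq_zero.1 ((hv _).symm.trans (by rw [h0, Rat.cast_zero]))]
    exact dvd_zero _
  set c : ℕ → ℝ := fun n => (p : ℝ) ^ ψ (n + 1) * v (ψ (n + 1))
  have hc : Tendsto (fun n => |c (n + 1)| / |c n|) atTop (𝓝 q) :=
    (tendsto_abs_pow_mul_div_of_recurrence hp hrec (fun n => (ZMod.val_lt _).le) hψmono hψmem hψall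
      hv0 hlim).comp (tendsto_add_atTop_nat 1)
  constructor
  · have hc0 n : c n ≠ 0 :=
      mul_ne_zero (pow_ne_zero _ (Nat.cast_ne_zero.2 hp)) (Rat.cast_ne_zero.2 (hv0 _))
    simpa [c, abs_mul] using
      (tendsto_abs_rpow_inv_of_tendsto_abs_div (Nat.cast_pos.2 hq) hc0 hc).limsup_eq
  · rw [FormalMultilinearSeries.ofScalars_radius_eq_inv_of_tendsto ℝ c (r := q)
      (by simpa using hq.ne') (by simpa only [Real.norm_eq_abs, NNReal.coe_natCast] using hc),
      ENNReal.coe_inv (by simpa using hq.ne'), ENNReal.coe_natCast]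

/-- Let `u ∈ ℤ_p` be rational (with `v n ∈ ℚ` equal to the iterate `g^n(u)`), `φ_{p,q}(u)` not
rational, and `ψ` the enumeration of the indices `i` with `p ∤ u_i`. Then
`limsup (p^{ψ(n+1)}|u_{ψ(n+1)}|_∞)^{1/n} = q`, i.e. the real power series
`S_u(T) = Σ p^{ψ(n+1)} u_{ψ(n+1)} T^n` has radius of convergence `1/q`. -/
theorem stmt17 (p q : ℕ) [Fact p.Prime] (hq : 0 < q) (hpq : Nat.Coprime p q)
    (g : ℤ_[p] → ℤ_[p])
    (hg : ∀ u : ℤ_[p], (p : ℤ_[p]) * g u =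
      if (p : ℤ_[p]) ∣ u then u
      else (q : ℤ_[p]) * u + (eps0 (-((q : ℤ_[p]) * u)) : ℤ_[p]))
    (u : ℤ_[p]) (v : ℕ → ℚ)
    (hv : ∀ n : ℕ, ((v n : ℚ) : ℚ_[p]) = ((g^[n] u : ℤ_[p]) : ℚ_[p]))
    (hirr : ((phi p q g u : ℤ_[p]) : ℚ_[p]) ∉ Set.range ((↑) : ℚ → ℚ_[p]))
    (ψ : ℕ → ℕ) (hψmono : StrictMono ψ)
    (hψmem : ∀ n, ¬ (p : ℤ_[p]) ∣ g^[ψ n] u)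
    (hψall : ∀ i, ¬ (p : ℤ_[p]) ∣ g^[i] u → ∃ n, ψ n = i) :
    Filter.limsup
      (fun n : ℕ =>
        ((p : ℝ) ^ ψ (n + 1) * |((v (ψ (n + 1)) : ℚ) : ℝ)|) ^ ((n : ℝ)⁻¹))
      Filter.atTop = (q : ℝ) ∧
    (FormalMultilinearSeries.ofScalars ℝ
        (fun n : ℕ => (p : ℝ) ^ ψ (n + 1) * ((v (ψ (n + 1)) : ℚ) : ℝ))).radius
      = ((q : ENNReal))⁻¹ :=
  stmt17_general p q hq g hg u v hv hirr ψ hψmono hψmem hψall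
end

section
/- The map φ is a bijection of 𝔽_q[[T]] onto itself, and it is an isometry for the T-adic metric: for all f, h ∈ 𝔽_q[[T]], the order of vanishing of φ(f) − φ(h) equals the order of vanishing of f − h (as elements of ℕ ∪ {∞}). -/
open PowerSeries
open scoped Classical

/-- `φ(f) = Σ (Sⁿf)(0) Tⁿ`, for a given iteration map `S` on formal power series. -/
noncomputable def phiF {F : Type*} [Field F] (S : PowerSeries F → PowerSeries F)
    (f : PowerSeries F) : PowerSeries F :=
  PowerSeries.mk fun n => PowerSeries.constantCoeff (S^[n] f)

/-!
If `f ≡ h mod Tⁿ` then `φ(f) − φ(h) ≡ f − h mod Tⁿ⁺¹`: indeed `φ(f) = f(0) + T·φ(S f)`, and once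
the constant terms of `f` and `h` agree, `T·(S f − S h)` is `f − h` or `(1 + T)(f − h)`, so induction
on `n` applies. Hence `φ(f) − φ(h)` and `f − h` have the same leading term, which is the isometry,
and for every `g` the map `f ↦ f + g − φ(f)` is a `T`-adic contraction whose limit point `f`
satisfies `φ(f) = g`.
-/

namespace PowerSeries

variable {R : Type*} [CommRing R]

theorem X_pow_dvd_iff_le_order {n : ℕ} {φ : R⟦X⟧} : X ^ n ∣ φ ↔ (n : ℕ∞) ≤ φ.order := by
  rw [order_eq_emultiplicity_X]
  exact pow_dvd_iff_le_emultiplicity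

theorem coeff_eq_of_X_pow_dvd_sub {n k : ℕ} {φ ψ : R⟦X⟧} (h : X ^ n ∣ φ - ψ) (hk : k < n) :
    coeff k φ = coeff k ψ := by
  rw [← sub_eq_zero, ← map_sub]
  exact X_pow_dvd_iff.mp h k hk

theorem constantCoeff_eq_of_X_dvd_sub {φ ψ : R⟦X⟧} (h : X ∣ φ - ψ) :
    constantCoeff φ = constantCoeff ψ := by
  rw [← sub_eq_zero, ← map_sub]
  exact X_dvd_iff.mp h

theorem order_eq_of_order_lt_order_sub {φ ψ : R⟦X⟧} (h : φ.order < (ψ - φ).order) :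
    ψ.order = φ.order := by
  rw [← add_sub_cancel φ ψ, order_add_of_order_ne _ _ h.ne, min_eq_left h.le]

theorem exists_isFixedPt_of_X_pow_dvd_sub (ψ : R⟦X⟧ → R⟦X⟧)
    (hψ : ∀ (n : ℕ) (f g : R⟦X⟧), X ^ n ∣ f - g → X ^ (n + 1) ∣ ψ f - ψ g) :
    ∃ f, Function.IsFixedPt ψ f := by
  set a : ℕ → R⟦X⟧ := fun n => ψ^[n] 0
  have a_succ (n : ℕ) : a (n + 1) = ψ (a n) := Function.iterate_succ_apply' ψ n 0
  have step (n : ℕ) : X ^ n ∣ a (n + 1) - a n := by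
    induction n with
    | zero => exact pow_zero (X : R⟦X⟧) ▸ one_dvd _
    | succ n ih =>
      have := hψ n _ _ ih
      rwa [← a_succ, ← a_succ] at this
  have cauchy {n m : ℕ} (hnm : n ≤ m) : X ^ n ∣ a m - a n := by
    induction m, hnm using Nat.le_induction with
    | base => rw [sub_self]; exact dvd_zero _
    | succ m hnm ih =>
      rw [← sub_add_sub_cancel]
      exact dvd_add ((pow_dvd_pow X hnm).trans (step m)) ih
  set L : R⟦X⟧ := mk fun k => coeff k (a (k + 1))
  have hL (n : ℕ) : X ^ n ∣ L - a n := by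
    refine X_pow_dvd_iff.mpr fun k hk => ?_
    rw [map_sub, coeff_mk, coeff_eq_of_X_pow_dvd_sub (cauchy hk) (Nat.lt_succ_self k), sub_self]
  refine ⟨L, ?_⟩
  rw [Function.IsFixedPt, ← sub_eq_zero]
  ext k
  have hdvd : X ^ (k + 1) ∣ ψ L - L := by
    have := dvd_sub (hψ k _ _ (hL k)) (hL (k + 1))
    rwa [← a_succ, sub_sub_sub_cancel_right] at this
  rw [map_sub, map_zero, coeff_eq_of_X_pow_dvd_sub hdvd (Nat.lt_succ_self k), sub_self]

end PowerSeries

section Shift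

variable {F : Type*} [Field F]

def IsShift (S : F⟦X⟧ → F⟦X⟧) : Prop :=
  ∀ f, X * S f = if constantCoeff f = 0 then f else (1 + X) * f - C (constantCoeff f)

variable {S : F⟦X⟧ → F⟦X⟧}

theorem phiF_eq (f : F⟦X⟧) : phiF S f = C (constantCoeff f) + X * phiF S (S f) := by
  ext (_ | n)
  · simp [phiF]
  · simp [phiF, coeff_succ_X_mul, Function.iterate_succ_apply]

namespace IsShift

variable (hS : IsShift S)
include hS

theorem sub_eq_or {f h q : F⟦X⟧} (hq : f - h = X * q) :
    S f - S h = q ∨ S f - S h = (1 + X) * q := by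
  have hconst := constantCoeff_eq_of_X_dvd_sub (hq ▸ dvd_mul_right X q)
  have hX : X * (S f - S h) = f - h ∨ X * (S f - S h) = (1 + X) * (f - h) := by
    rw [mul_sub, hS, hS, hconst]
    split_ifs
    · exact Or.inl rfl
    · exact Or.inr (by ring)
  rw [hq, ← mul_left_comm] at hX
  exact hX.imp (mul_left_cancel₀ X_ne_zero) (mul_left_cancel₀ X_ne_zero)

theorem X_pow_succ_dvd_phiF_sub_sub (n : ℕ) {f h : F⟦X⟧} (hfh : X ^ n ∣ f - h) :
    X ^ (n + 1) ∣ phiF S f - phiF S h - (f - h) := by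
  induction n generalizing f h with
  | zero =>
    rw [zero_add, pow_one, X_dvd_iff, phiF_eq f, phiF_eq h]
    simp
  | succ n ih =>
    obtain ⟨r, hr⟩ := hfh
    have hq : f - h = X * (X ^ n * r) := by rw [hr, pow_succ', mul_assoc]
    have hconst := constantCoeff_eq_of_X_dvd_sub (hq ▸ dvd_mul_right X _)
    have hsplit : phiF S f - phiF S h - (f - h) =
        X * (phiF S (S f) - phiF S (S h) - (S f - S h)) + X * (S f - S h - X ^ n * r) := by
      rw [phiF_eq f, phiF_eq h, hconst, hq]
      ring
    obtain ⟨hS_dvd, hS_err⟩ : X ^ n ∣ S f - S h ∧ X ^ (n + 1) ∣ S f - S h - X ^ n * r := by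
      rcases hS.sub_eq_or hq with hSfh | hSfh <;> rw [hSfh]
      · exact ⟨dvd_mul_right _ _, (sub_self (X ^ n * r)).symm ▸ dvd_zero _⟩
      · refine ⟨dvd_mul_of_dvd_right (dvd_mul_right _ _) _, ?_⟩
        rw [add_mul, one_mul, add_sub_cancel_left, pow_succ', ← mul_assoc]
        exact dvd_mul_right _ _
    rw [hsplit, pow_succ' X (n + 1)]
    exact dvd_add (mul_dvd_mul_left X (ih hS_dvd)) (mul_dvd_mul_left X hS_err)

theorem order_phiF_sub_phiF (f h : F⟦X⟧) : (phiF S f - phiF S h).order = (f - h).order := by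
  by_cases hfh : f - h = 0
  · rw [sub_eq_zero.mp hfh, sub_self, sub_self]
  apply order_eq_of_order_lt_order_sub
  have key := hS.X_pow_succ_dvd_phiF_sub_sub _ (X_pow_order_dvd (φ := f - h))
  rw [X_pow_dvd_iff_le_order, Nat.cast_succ] at key
  rw [← coe_toNat_order hfh]
  exact (ENat.add_one_le_iff (ENat.natCast_ne_top _)).mp key

theorem phiF_injective : Function.Injective (phiF S) := fun f h hfh => by
  rw [← sub_eq_zero, ← order_eq_top, ← hS.order_phiF_sub_phiF, hfh, sub_self, order_zero]

theorem phiF_surjective : Function.Surjective (phiF S) := fun g => by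
  obtain ⟨f, hf⟩ := exists_isFixedPt_of_X_pow_dvd_sub (fun f => f + (g - phiF S f))
    fun n f h hfh => by
      rw [show f + (g - phiF S f) - (h + (g - phiF S h)) = -(phiF S f - phiF S h - (f - h)) by
        ring]
      exact dvd_neg.mpr (hS.X_pow_succ_dvd_phiF_sub_sub n hfh)
  exact ⟨f, (by simpa [Function.IsFixedPt, sub_eq_zero] using hf : g = phiF S f).symm⟩

end IsShift

end Shift

theorem stmt18_general {F : Type*} [Field F]
    (S : PowerSeries F → PowerSeries F)
    (hS : ∀ f : PowerSeries F, PowerSeries.X * S f =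
      if PowerSeries.constantCoeff f = 0 then f
      else (1 + PowerSeries.X) * f - PowerSeries.C (PowerSeries.constantCoeff f)) :
    Function.Bijective (phiF S) ∧
      ∀ f h : PowerSeries F, (phiF S f - phiF S h).order = (f - h).order :=
  ⟨⟨IsShift.phiF_injective hS, IsShift.phiF_surjective hS⟩, IsShift.order_phiF_sub_phiF hS⟩

/-- The map `φ` is a bijective isometry of `𝔽_q[[T]]` for the `T`-adic metric:
`ord(φ(f) − φ(h)) = ord(f − h)`. Here `S` is characterized by
`T·S(f) = f` if `f(0) = 0` and `T·S(f) = (1+T)f − f(0)` otherwise. -/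
theorem stmt18 {F : Type*} [Field F] [Fintype F]
    (S : PowerSeries F → PowerSeries F)
    (hS : ∀ f : PowerSeries F, PowerSeries.X * S f =
      if PowerSeries.constantCoeff f = 0 then f
      else (1 + PowerSeries.X) * f - PowerSeries.C (PowerSeries.constantCoeff f)) :
    Function.Bijective (phiF S) ∧
      ∀ f h : PowerSeries F, (phiF S f - phiF S h).order = (f - h).order :=
  stmt18_general S hS
end

section
/- For every f ∈ 𝔽_q[[T]], f is a rational power series (i.e. there exist polynomials P, Q ∈ 𝔽_q[T] with Q ≠ 0 and Q·f = P in 𝔽_q[[T]]) if and only if the sequence (S^n(f))_{n∈ℕ} is ultimately periodic, i.e. there exist n₀ ∈ ℕ and k ≥ 1 with S^{n₀+k}(f) = S^{n₀}(f). -/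
/-!
If `Q f = P`, then every iterate `Sⁿ f` has a numerator over the same denominator `Q`, of degree at
most `max (deg P) (deg Q)`: clearing `T` from `u P - c Q` (with `u ∈ {1, 1 + T}`) only lowers the
degree. Over a finite field there are finitely many such numerators, so the orbit repeats.
Conversely, unrolling `n` steps gives `q f = Tⁿ Sⁿ f + r` with `q(0) = 1`; if `Sᵏ g = g` then
`(q - Tᵏ) g = r` exhibits `g` as rational, and one step back preserves rationality.
-/

open scoped Classical
open PowerSeries
open scoped Polynomial

namespace PowerSeries

variable {R : Type*} [CommRing R]

def IsRational (f : R⟦X⟧) : Prop :=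
  ∃ P Q : R[X], Q ≠ 0 ∧ (Q : R⟦X⟧) * f = P

theorem IsRational.of_X_mul_eq [IsDomain R] {g h : R⟦X⟧} {u : R[X]} {c : R} (hu : u ≠ 0)
    (hgh : X * h = (u : R⟦X⟧) * g - C c) (hh : h.IsRational) : g.IsRational := by
  obtain ⟨P, Q, hQ, hQh⟩ := hh
  refine ⟨Polynomial.X * P + Polynomial.C c * Q, u * Q, mul_ne_zero hu hQ, ?_⟩
  push_cast
  linear_combination (X : R⟦X⟧) * hQh - (Q : R⟦X⟧) * hgh

theorem exists_mul_eq_of_X_mul_eq {g h : R⟦X⟧} {u P Q : R[X]} {c : R} {D : ℕ}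
    (hu : u.natDegree ≤ 1) (hgh : X * h = (u : R⟦X⟧) * g - C c) (hQg : (Q : R⟦X⟧) * g = P)
    (hP : P.natDegree ≤ D) (hQ : Q.natDegree ≤ D) :
    ∃ P' : R[X], P'.natDegree ≤ D ∧ (Q : R⟦X⟧) * h = P' := by
  set N := u * P - Polynomial.C c * Q
  have hN : (N : R⟦X⟧) = X * ((Q : R⟦X⟧) * h) := by
    simp only [N, Polynomial.coe_sub, Polynomial.coe_mul, Polynomial.coe_C]
    linear_combination -(u : R⟦X⟧) * hQg - (Q : R⟦X⟧) * hgh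
  have hN0 : N.coeff 0 = 0 := by
    rw [← Polynomial.constantCoeff_coe, hN, map_mul, constantCoeff_X, zero_mul]
  have hNdeg : N.natDegree ≤ D + 1 :=
    (Polynomial.natDegree_sub_le _ _).trans <| max_le
      ((Polynomial.natDegree_mul_le).trans (by omega))
      ((Polynomial.natDegree_C_mul_le _ _).trans (by omega))
  have hXN : Polynomial.X * N.divX = N := by simpa [hN0] using N.X_mul_divX_add
  refine ⟨N.divX, by rw [Polynomial.natDegree_divX_eq_natDegree_tsub_one]; omega,
    X_mul_cancel ?_⟩
  rw [← hN, ← Polynomial.coe_X, ← Polynomial.coe_mul, hXN]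

end PowerSeries

theorem Polynomial.finite_setOf_natDegree_le (R : Type*) [CommRing R] [Finite R] (D : ℕ) :
    {p : R[X] | p.natDegree ≤ D}.Finite := by
  have : Finite (Polynomial.degreeLT R (D + 1)) := Module.finite_of_finite R
  refine (Set.toFinite (Polynomial.degreeLT R (D + 1) : Set R[X])).subset fun p hp => ?_
  rw [SetLike.mem_coe, Polynomial.mem_degreeLT, Polynomial.degree_lt_iff_coeff_zero]
  exact fun m hm => Polynomial.coeff_eq_zero_of_natDegree_lt (lt_of_le_of_lt hp hm)

def IsShiftMap {R : Type*} [CommRing R] (S : R⟦X⟧ → R⟦X⟧) : Prop :=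
  ∀ f, X * S f = if constantCoeff f = 0 then f else (1 + X) * f - C (constantCoeff f)

section ShiftFactor

variable {R : Type*} [CommRing R]

noncomputable def shiftFactor (f : R⟦X⟧) : R[X] :=
  if constantCoeff f = 0 then 1 else 1 + Polynomial.X

theorem coeff_shiftFactor_zero (f : R⟦X⟧) : (shiftFactor f).coeff 0 = 1 := by
  unfold shiftFactor; split_ifs <;> simp

theorem natDegree_shiftFactor_le (f : R⟦X⟧) : (shiftFactor f).natDegree ≤ 1 := by
  unfold shiftFactor; split_ifs
  · simp
  · exact Polynomial.natDegree_add_le_of_degree_le (by simp) Polynomial.natDegree_X_le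

theorem shiftFactor_ne_zero [Nontrivial R] (f : R⟦X⟧) : shiftFactor f ≠ 0 := fun h => by
  simpa [h] using coeff_shiftFactor_zero f

end ShiftFactor

namespace IsShiftMap

variable {R : Type*} [CommRing R] {S : R⟦X⟧ → R⟦X⟧}

-- The branch `constantCoeff f = 0` has this shape too, since then `C (constantCoeff f) = 0`.
theorem X_mul_apply (hS : IsShiftMap S) (f : R⟦X⟧) :
    X * S f = (shiftFactor f : R⟦X⟧) * f - C (constantCoeff f) := by
  rw [hS f, shiftFactor]; split_ifs with h <;> simp [h]

theorem exists_mul_iterate_eq (hS : IsShiftMap S) {f : R⟦X⟧} {P Q : R[X]} {D : ℕ}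
    (hQf : (Q : R⟦X⟧) * f = P) (hP : P.natDegree ≤ D) (hQ : Q.natDegree ≤ D) (n : ℕ) :
    ∃ P' : R[X], P'.natDegree ≤ D ∧ (Q : R⟦X⟧) * S^[n] f = P' := by
  induction n with
  | zero => exact ⟨P, hP, hQf⟩
  | succ n ih =>
    obtain ⟨P', hP', hQP'⟩ := ih
    rw [Function.iterate_succ_apply']
    exact exists_mul_eq_of_X_mul_eq (natDegree_shiftFactor_le _) (hS.X_mul_apply _) hQP' hP' hQ

theorem exists_iterate_add_eq_of_isRational [IsDomain R] [Finite R] (hS : IsShiftMap S)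
    {f : R⟦X⟧} (hf : f.IsRational) : ∃ n₀, ∃ k ≥ 1, S^[n₀ + k] f = S^[n₀] f := by
  obtain ⟨P, Q, hQ, hQf⟩ := hf
  choose P' hP' hQP' using
    hS.exists_mul_iterate_eq hQf (le_max_left _ Q.natDegree) (le_max_right P.natDegree _)
  obtain ⟨a, b, hab, hP'ab⟩ :=
    (Polynomial.finite_setOf_natDegree_le R _).exists_lt_map_eq_of_forall_mem hP'
  refine ⟨a, b - a, by omega, ?_⟩
  rw [Nat.add_sub_cancel' hab.le]
  refine (mul_left_cancel₀ (Polynomial.coe_eq_zero_iff.not.mpr hQ) ?_).symm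
  rw [hQP', hQP', hP'ab]

theorem exists_mul_eq_X_pow_mul_iterate_add (hS : IsShiftMap S) (f : R⟦X⟧) (n : ℕ) :
    ∃ q r : R[X], q.coeff 0 = 1 ∧ (q : R⟦X⟧) * f = X ^ n * S^[n] f + (r : R⟦X⟧) := by
  induction n with
  | zero => exact ⟨1, 0, by simp, by simp⟩
  | succ n ih =>
    obtain ⟨q, r, hq, hqf⟩ := ih
    set g := S^[n] f
    refine ⟨shiftFactor g * q,
      Polynomial.X ^ n * Polynomial.C (constantCoeff g) + shiftFactor g * r,
      by simp [Polynomial.mul_coeff_zero, hq, coeff_shiftFactor_zero], ?_⟩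
    rw [Function.iterate_succ_apply']
    push_cast
    linear_combination (shiftFactor g : R⟦X⟧) * hqf - X ^ n * hS.X_mul_apply g

theorem isRational_of_iterate_eq_self [IsDomain R] (hS : IsShiftMap S) {g : R⟦X⟧} {k : ℕ}
    (hk : k ≠ 0) (hg : S^[k] g = g) : g.IsRational := by
  obtain ⟨q, r, hq, hqg⟩ := hS.exists_mul_eq_X_pow_mul_iterate_add g k
  refine ⟨r, q - Polynomial.X ^ k, fun h => ?_, ?_⟩
  · simpa [hq, Polynomial.coeff_X_pow, hk.symm] using congrArg (Polynomial.coeff · 0) h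
  · rw [hg] at hqg
    push_cast
    linear_combination hqg

theorem isRational_of_isRational_iterate [IsDomain R] (hS : IsShiftMap S) {f : R⟦X⟧} (n : ℕ)
    (hf : (S^[n] f).IsRational) : f.IsRational := by
  induction n generalizing f with
  | zero => exact hf
  | succ n ih => exact (ih hf).of_X_mul_eq (shiftFactor_ne_zero f) (hS.X_mul_apply f)

theorem isRational_of_iterate_add_eq [IsDomain R] (hS : IsShiftMap S) {f : R⟦X⟧} {n₀ k : ℕ}
    (hk : 1 ≤ k) (h : S^[n₀ + k] f = S^[n₀] f) : f.IsRational := by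
  refine hS.isRational_of_isRational_iterate n₀ (hS.isRational_of_iterate_eq_self (k := k)
    (by omega) ?_)
  rwa [← Function.iterate_add_apply, add_comm]

end IsShiftMap

/-- A formal power series `f ∈ 𝔽_q[[T]]` is rational iff the sequence of iterates `(Sⁿf)`
is ultimately periodic, where `S` is characterized by `T·S(f) = f` if `f(0) = 0` and
`T·S(f) = (1+T)f − f(0)` otherwise. -/
theorem stmt19 {F : Type*} [Field F] [Fintype F]
    (S : PowerSeries F → PowerSeries F)
    (hS : ∀ f : PowerSeries F, PowerSeries.X * S f =
      if PowerSeries.constantCoeff f = 0 then f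
      else (1 + PowerSeries.X) * f - PowerSeries.C (PowerSeries.constantCoeff f))
    (f : PowerSeries F) :
    (∃ P Q : Polynomial F, Q ≠ 0 ∧ (Q : PowerSeries F) * f = (P : PowerSeries F)) ↔
      ∃ n₀ : ℕ, ∃ k ≥ 1, S^[n₀ + k] f = S^[n₀] f := by
  have hS' : IsShiftMap S := hS
  exact ⟨hS'.exists_iterate_add_eq_of_isRational,
    fun ⟨_, _, hk, h⟩ => hS'.isRational_of_iterate_add_eq hk h⟩
end
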